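/- arXiv:2004.11972 — 5 statements merged into one kernel-verified Lean document; each statement's English description precedes it below -/
import Mathlib

section
/- Let Π be a κ-obstruction in a society Λ, where either 1 ≤ κ ≤ ℵ₀ or κ is a regular uncountable cardinal. Then δ(Π) = κ, where δ(Π) is the minimum of the cardinals |B| over all B ⊆ M_Π such that Π − B has an espousal. -/
universe u

open Cardinal

/-- A *society* `(M, W, K)`: a set `M` of men, a set `W` of women (disjoint from `M`,
here realized by taking them in different types), and a set `K ⊆ M × W` of compatible
pairs. -/
structure Society (α β : Type u) where
  M : Set α
  W : Set β
  K : Set (α × β)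
  K_mem : ∀ p ∈ K, p.1 ∈ M ∧ p.2 ∈ W

namespace Society

variable {α β : Type u}

/-- An *espousal* of a society: an injective map of the men into the women pairing
each man with a woman compatible with him. -/
def Espousal (Λ : Society α β) (E : α → β) : Prop :=
  Set.InjOn E Λ.M ∧ ∀ m ∈ Λ.M, (m, E m) ∈ Λ.K

def HasEspousal (Λ : Society α β) : Prop := ∃ E, Λ.Espousal E

/-- A society is *critical* if it has an espousal and every espousal is onto the women. -/
def Critical (Λ : Society α β) : Prop :=
  Λ.HasEspousal ∧ ∀ E, Λ.Espousal E → Λ.W ⊆ E '' Λ.M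

/-- `Φ.Sub Λ`: `Π` is the subsociety `Λ[A, X]` of `Λ` with `A = Φ.M`, `X = Φ.W`. -/
def Sub (Φ Λ : Society α β) : Prop :=
  Φ.M ⊆ Λ.M ∧ Φ.W ⊆ Λ.W ∧ Φ.K = Λ.K ∩ Φ.M ×ˢ Φ.W

/-- The subsociety `Λ[A, X]` of `Λ`. -/
def restrict (Λ : Society α β) (A : Set α) (X : Set β) : Society α β where
  M := Λ.M ∩ A
  W := Λ.W ∩ X
  K := Λ.K ∩ A ×ˢ X
  K_mem := fun p hp => ⟨⟨(Λ.K_mem p hp.1).1, hp.2.1⟩, (Λ.K_mem p hp.1).2, hp.2.2⟩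

/-- `Λ − B = Λ[M∖B, W]`. -/
def erase (Λ : Society α β) (B : Set α) : Society α β := Λ.restrict Bᶜ Set.univ

/-- `Λ/Π = Λ[M_Λ∖M_Π, W_Λ∖W_Π]`. -/
def quot (Λ Φ : Society α β) : Society α β := Λ.restrict Φ.Mᶜ Φ.Wᶜ

/-- A subsociety `Π` of `Λ` is *saturated* in `Λ` if `K_Λ[M_Π] ⊆ W_Π`. -/
def SaturatedIn (Φ Λ : Society α β) : Prop :=
  Φ.Sub Λ ∧ ∀ p ∈ Λ.K, p.1 ∈ Φ.M → p.2 ∈ Φ.W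

/-- The empty society. -/
def empty : Society α β := ⟨∅, ∅, ∅, fun p hp => absurd hp (Set.notMem_empty p)⟩

/-- The society `(∅, {w}, ∅)`. -/
def singletonW (w : β) : Society α β :=
  ⟨∅, {w}, ∅, fun p hp => absurd hp (Set.notMem_empty p)⟩

/-- Componentwise union of a family of societies over an index set. -/
def unionIdx (T : Ordinal.{u} → Society α β) (I : Set Ordinal.{u}) : Society α β where
  M := ⋃ i ∈ I, (T i).M
  W := ⋃ i ∈ I, (T i).W
  K := ⋃ i ∈ I, (T i).K
  K_mem := by
    intro p hp
    simp only [Set.mem_iUnion] at hp ⊢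
    obtain ⟨i, hi, hpK⟩ := hp
    exact ⟨⟨i, hi, ((T i).K_mem p hpK).1⟩, ⟨i, hi, ((T i).K_mem p hpK).2⟩⟩

/-- Union of the societies `T i` for `i < θ`. -/
def unionLt (T : Ordinal.{u} → Society α β) (θ : Ordinal.{u}) : Society α β :=
  unionIdx T (Set.Iio θ)

/-- Union of the societies `T i` for `i ≤ θ`. -/
def unionLe (T : Ordinal.{u} → Society α β) (θ : Ordinal.{u}) : Society α β :=
  unionIdx T (Set.Iic θ)

/-- `(T i : i ≤ θ)` is a *`θ`-tower* in `Λ`: a continuous nondescending family of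
saturated subsocieties of `Λ` starting with the empty society. -/
def IsTower (Λ : Society α β) (θ : Ordinal.{u}) (T : Ordinal.{u} → Society α β) : Prop :=
  T 0 = Society.empty ∧
  (∀ i ≤ θ, (T i).SaturatedIn Λ) ∧
  (∀ i j : Ordinal.{u}, i < j → j ≤ θ → (T i).Sub (T j)) ∧
  (∀ i ≤ θ, Order.IsSuccLimit i → T i = unionLt T i)

end Society

/-- A set of ordinals is a *club* in `o`: closed (the supremum of any nonempty subset is
`o` or again in the set) and unbounded (with supremum `o`) in `o`. -/
def IsClubIn (C : Set Ordinal.{u}) (o : Ordinal.{u}) : Prop :=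
  C ⊆ Set.Iio o ∧ (∀ A ⊆ C, A.Nonempty → sSup A = o ∨ sSup A ∈ C) ∧ sSup C = o

/-- A set of ordinals is *stationary* in `o` if it meets every club in `o`. -/
def IsStationaryIn (S : Set Ordinal.{u}) (o : Ordinal.{u}) : Prop :=
  S ⊆ Set.Iio o ∧ ∀ C, IsClubIn C o → (S ∩ C).Nonempty

/-- `IsObstruction κ Φ Λ`: `Π` is a *`κ`-obstruction* in `Λ`.  For `1 ≤ κ ≤ ℵ₀` this
means `Π` is saturated in `Λ` and `Π − A` is critical for some `A ⊆ M_Π` with `|A| = κ`.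
For `κ` regular uncountable it means `Π` is the union of a `κ`-tower `(Σ_α : α ≤ κ)` in
`Λ` such that each quotient `Σ_{α+1}/Σ_α` is either a `μ`-obstruction in `Λ/Σ_α` for some
`μ < κ` (which happens on a stationary set `S` of indices `α < κ`) or of the form
`(∅, {w}, ∅)` for some `w ∈ W_Λ`. -/
inductive IsObstruction {α β : Type u} :
    Cardinal.{u} → Society α β → Society α β → Prop
  | small {κ : Cardinal.{u}} {Φ Λ : Society α β}
      (h1 : 1 ≤ κ) (h2 : κ ≤ ℵ₀)
      (hsat : Φ.SaturatedIn Λ)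
      (hA : ∃ A ⊆ Φ.M, Cardinal.mk A = κ ∧ (Φ.erase A).Critical) :
      IsObstruction κ Φ Λ
  | large {κ : Cardinal.{u}} {Φ Λ : Society α β}
      (T : Ordinal.{u} → Society α β) (S : Set Ordinal.{u})
      (hreg : κ.IsRegular) (hunc : ℵ₀ < κ)
      (htower : Society.IsTower Λ κ.ord T)
      (μ : Ordinal.{u} → Cardinal.{u}) (hμ : ∀ i ∈ S, μ i < κ)
      (hS : ∀ i ∈ S, IsObstruction (μ i) ((T (i + 1)).quot (T i)) (Λ.quot (T i)))
      (hoff : ∀ i < κ.ord, i ∉ S →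
        ∃ w ∈ Λ.W, (T (i + 1)).quot (T i) = Society.singletonW w)
      (hstat : IsStationaryIn S κ.ord)
      (hunion : Φ = Society.unionLe T κ.ord) :
      IsObstruction κ Φ Λ

/-- `δ(Λ)`: the least cardinality of a set `B ⊆ M_Λ` such that `Λ − B` has an espousal. -/
noncomputable def Society.delta (Λ : Society α β) : Cardinal.{u} :=
  sInf {c | ∃ B ⊆ Λ.M, Cardinal.mk B = c ∧ (Λ.erase B).HasEspousal}

/-!
Both inequalities are proved together by induction on the obstruction, in the stronger form:
some set of at most `κ` men can be deleted from `Π` to leave an espousal, and whenever `E`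
espouses `Π − B`, `κ + |W_Π ∖ E(M_Π ∖ B)| ≤ |B|`.

For `κ ≤ ℵ₀` let `F` espouse the critical society `Π − A`. Alternating walks `F m ↦ E m`
terminate, since otherwise switching `F` to `E` along the walk would espouse `Π − A` without
its starting woman; they inject `(A ∖ B) ⊔ U` into `F(B ∖ A)`, `U` being the women missed by `E`.

For regular uncountable `κ`, the deleted sets of the layers `Σ_{α+1}/Σ_α` glue to one of size
`κ`. Conversely, given `E`, delete in each layer the men of `B` and those matched into an
earlier layer. The induction hypothesis gives every layer `α ∈ S` one more deleted man than
unmatched women. Passing from a deleted man outside `B` to his partner, an unmatched woman of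
an earlier layer, and from an unmatched woman to a deleted man of her layer, one descends until
reaching `B` or a layer outside `S`, and distinct starts have distinct ends. The layers `α` whose
surplus man ends in a layer `γ < α` carry an injective regressive function, so they do not
contain a club; hence unboundedly many surplus men end in `B`, and `|B| ≥ κ`.
-/

namespace Relation

variable {X : Type*} {r : X → X → Prop}

theorem ReflTransGen.eq_of_leftUnique (hr : Relator.LeftUnique r) {x x' y : X}
    (hx : ∀ z, ¬ r z x) (hx' : ∀ z, ¬ r z x') (h : ReflTransGen r x y)
    (h' : ReflTransGen r x' y) : x = x' := by
  have hflip : Relator.RightUnique (flip r) := fun _ _ _ hab hac => hr hab hac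
  rcases ReflTransGen.total_of_right_unique hflip h.swap h'.swap with h'' | h''
  · rcases h''.cases_head with hxx' | ⟨c, hc, -⟩
    · exact hxx'
    · exact absurd hc (hx c)
  · rcases h''.cases_head with hx'x | ⟨c, hc, -⟩
    · exact hx'x.symm
    · exact absurd hc (hx' c)

theorem exists_reflTransGen_forall_not (hwf : WellFounded (flip r)) (x : X) :
    ∃ y, ReflTransGen r x y ∧ ∀ z, ¬ r y z := by
  induction x using hwf.induction with
  | _ x ih =>
    by_cases hx : ∃ z, r x z
    · obtain ⟨z, hxz⟩ := hx
      obtain ⟨y, hzy, hy⟩ := ih z hxz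
      exact ⟨y, .head hxz hzy, hy⟩
    · exact ⟨x, .refl, not_exists.1 hx⟩

theorem ReflTransGen.eq_or_lt {δ : Type*} [Preorder δ] {f : X → δ}
    (hf : ∀ a b, r a b → f b < f a) {x y : X} (h : ReflTransGen r x y) : y = x ∨ f y < f x := by
  induction h with
  | refl => exact .inl rfl
  | tail _ hbc ih =>
    refine .inr ((hf _ _ hbc).trans_le ?_)
    rcases ih with rfl | hlt
    exacts [le_rfl, hlt.le]

theorem exists_injective_reflTransGen_sink {ι : Type*} (hr : Relator.LeftUnique r)
    {src : ι → X} (hsrc : Function.Injective src) (hsource : ∀ i z, ¬ r z (src i))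
    (hreach : ∀ i, ∃ y, ReflTransGen r (src i) y ∧ ∀ z, ¬ r y z) :
    ∃ snk : ι → X, Function.Injective snk ∧ ∀ i, ReflTransGen r (src i) (snk i) ∧
      ∀ z, ¬ r (snk i) z := by
  choose snk hsnk using hreach
  refine ⟨snk, fun i j hij => hsrc ?_, hsnk⟩
  exact ReflTransGen.eq_of_leftUnique hr (hsource i) (hsource j) (hsnk i).1
    (hij ▸ (hsnk j).1)

end Relation

theorem Cardinal.mk_add_le_of_mk_diff_add_le {α : Type u} {A B : Set α} {c : Cardinal.{u}}
    (h : #↥(A \ B) + c ≤ #↥(B \ A)) : #A + c ≤ #B := by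
  rw [← Cardinal.mk_sdiff_add_mk (Set.inter_subset_left : A ∩ B ⊆ A),
    ← Cardinal.mk_sdiff_add_mk (Set.inter_subset_right : A ∩ B ⊆ B), Set.sdiff_self_inter,
    Set.sdiff_inter_self_eq_sdiff, add_right_comm]
  exact add_le_add_left h _

theorem Set.exists_injOn_mapsTo_diff_singleton {α β : Type u} {s : Set β} {t : Set α}
    (h : 1 + #s ≤ #t) : ∃ a ∈ t, ∃ f : β → α, Set.MapsTo f s (t \ {a}) ∧ Set.InjOn f s := by
  classical
  rw [add_comm, ← Cardinal.mk_option, Cardinal.le_def] at h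
  obtain ⟨e⟩ := h
  refine ⟨e none, (e none).2, fun x => if hx : x ∈ s then e (some ⟨x, hx⟩) else e none,
    fun x hx => ?_, fun x hx y hy hxy => ?_⟩
  · simp only [dif_pos hx]
    exact ⟨(e _).2, fun h => Option.some_ne_none _ (e.injective (Subtype.ext h))⟩
  · simp only [dif_pos hx, dif_pos hy] at hxy
    simpa using e.injective (Subtype.ext hxy)

/-! ### Critical societies -/

namespace Society

variable {α β : Type u}

theorem ext {Φ Ψ : Society α β} (hM : Φ.M = Ψ.M) (hW : Φ.W = Ψ.W) (hK : Φ.K = Ψ.K) :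
    Φ = Ψ := by
  cases Φ; cases Ψ; subst hM hW hK; rfl

@[simp]
theorem erase_M (Φ : Society α β) (B : Set α) : (Φ.erase B).M = Φ.M \ B := rfl

@[simp]
theorem erase_W (Φ : Society α β) (B : Set α) : (Φ.erase B).W = Φ.W := Set.inter_univ _

theorem espousal_erase_iff {Φ : Society α β} {B : Set α} {E : α → β} :
    (Φ.erase B).Espousal E ↔ Set.InjOn E (Φ.M \ B) ∧ ∀ m ∈ Φ.M \ B, (m, E m) ∈ Φ.K :=
  and_congr Iff.rfl (forall₂_congr fun _ hm => ⟨And.left, fun h => ⟨h, hm.2, trivial⟩⟩)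

theorem Espousal.mapsTo {Φ : Society α β} {E : α → β} (hE : Φ.Espousal E) :
    Set.MapsTo E Φ.M Φ.W :=
  fun m hm => (Φ.K_mem _ (hE.2 m hm)).2

def AlternatingStep (Φ : Society α β) (A B : Set α) (F E : α → β) (w w' : β) : Prop :=
  ∃ m ∈ Φ.M \ (A ∪ B), F m = w ∧ E m = w'

variable {Φ : Society α β} {A B : Set α} {F E : α → β}

/-- Switching `F` to `E` along an endless alternating walk from `v` would espouse the critical
society `Φ − A` without `v`. -/
theorem Critical.exists_alternatingStep_sink (hcrit : (Φ.erase A).Critical)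
    (hF : (Φ.erase A).Espousal F) (hE : (Φ.erase B).Espousal E) {v : β} (hv : v ∈ Φ.W)
    (hsrc : ∀ z, ¬ AlternatingStep Φ A B F E z v) :
    ∃ y, Relation.ReflTransGen (AlternatingStep Φ A B F E) v y ∧
      ∀ z, ¬ AlternatingStep Φ A B F E y z := by
  classical
  set r := AlternatingStep Φ A B F E
  by_contra! hno
  have hF' := espousal_erase_iff.1 hF
  have hE' := espousal_erase_iff.1 hE
  set P := {y | Relation.ReflTransGen r v y}
  have hPstep : ∀ m ∈ Φ.M \ A, F m ∈ P → m ∉ B ∧ E m ∈ P := by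
    intro m hm hmP
    obtain ⟨z, m', hm', hFm', rfl⟩ := hno _ hmP
    obtain rfl : m' = m := hF'.1 ⟨hm'.1, fun h => hm'.2 (.inl h)⟩ hm hFm'
    exact ⟨fun h => hm'.2 (.inr h), Relation.ReflTransGen.tail hmP ⟨m', hm', rfl, rfl⟩⟩
  let F' := fun m => if F m ∈ P then E m else F m
  have hF'esp : (Φ.erase A).Espousal F' := by
    refine espousal_erase_iff.2 ⟨fun x hx y hy hxy => ?_, fun m hm => ?_⟩
    · by_cases hxP : F x ∈ P <;> by_cases hyP : F y ∈ P <;>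
        simp only [F', hxP, hyP, if_true, if_false] at hxy
      · exact hE'.1 ⟨hx.1, (hPstep x hx hxP).1⟩ ⟨hy.1, (hPstep y hy hyP).1⟩ hxy
      · exact absurd (hxy ▸ (hPstep x hx hxP).2) hyP
      · exact absurd (hxy ▸ (hPstep y hy hyP).2) hxP
      · exact hF'.1 hx hy hxy
    · by_cases hmP : F m ∈ P <;> simp only [F', hmP, if_true, if_false]
      · exact hE'.2 m ⟨hm.1, (hPstep m hm hmP).1⟩
      · exact hF'.2 m hm
  obtain ⟨m, hm, hF'm⟩ := hcrit.2 F' hF'esp (by simpa using hv)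
  by_cases hmP : F m ∈ P <;> simp only [F', hmP, if_true, if_false] at hF'm
  · exact hsrc (F m) ⟨m, ⟨hm.1, not_or.2 ⟨hm.2, (hPstep m hm hmP).1⟩⟩, rfl, hF'm⟩
  · exact hmP (hF'm ▸ Relation.ReflTransGen.refl)

theorem Critical.mk_add_mk_unmatched_le (hA : A ⊆ Φ.M) (hcrit : (Φ.erase A).Critical)
    (hE : (Φ.erase B).Espousal E) : #A + #↥(Φ.W \ E '' (Φ.M \ B)) ≤ #B := by
  obtain ⟨F, hF⟩ := hcrit.1
  have honto : Φ.W ⊆ F '' (Φ.M \ A) := by simpa using hcrit.2 F hF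
  set r := AlternatingStep Φ A B F E
  set U := Φ.W \ E '' (Φ.M \ B)
  have hE' := espousal_erase_iff.1 hE
  have hEW : Set.MapsTo E (Φ.M \ B) Φ.W := by simpa using hE.mapsTo
  have hr : Relator.LeftUnique r := by
    rintro _ _ _ ⟨m, hm, rfl, rfl⟩ ⟨m', hm', rfl, hmm'⟩
    rw [hE'.1 ⟨hm'.1, fun h => hm'.2 (.inr h)⟩ ⟨hm.1, fun h => hm.2 (.inr h)⟩ hmm']
  let src : ↥(A \ B) ⊕ ↥U → β := Sum.elim (fun a => E a) (fun u => u)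
  have hsrcW : ∀ i, src i ∈ Φ.W := by
    rintro (a | u)
    exacts [hEW ⟨hA a.2.1, a.2.2⟩, u.2.1]
  have hsrc : Function.Injective src := by
    rintro (a | u) (a' | u') h
    · exact congrArg _ (Subtype.ext (hE'.1 ⟨hA a.2.1, a.2.2⟩ ⟨hA a'.2.1, a'.2.2⟩ h))
    · exact absurd ⟨a, ⟨hA a.2.1, a.2.2⟩, h⟩ u'.2.2
    · exact absurd ⟨a', ⟨hA a'.2.1, a'.2.2⟩, h.symm⟩ u.2.2
    · exact congrArg _ (Subtype.ext h)
  have hsource : ∀ i z, ¬ r z (src i) := by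
    rintro (a | u) _ ⟨m, hm, -, hEm⟩
    · obtain rfl : m = a := hE'.1 ⟨hm.1, fun h => hm.2 (.inr h)⟩ ⟨hA a.2.1, a.2.2⟩ hEm
      exact hm.2 (.inl a.2.1)
    · exact u.2.2 ⟨m, ⟨hm.1, fun h => hm.2 (.inr h)⟩, hEm⟩
  obtain ⟨snk, hinj, hsnk⟩ := Relation.exists_injective_reflTransGen_sink hr hsrc hsource
    fun i => hcrit.exists_alternatingStep_sink hF hE (hsrcW i) (hsource i)
  have hsnkF : ∀ i, snk i ∈ F '' (B \ A) := by
    intro i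
    have hW : snk i ∈ Φ.W := by
      rcases (hsnk i).1.cases_tail with h | ⟨-, -, m, hm, -, h⟩
      · exact h ▸ hsrcW i
      · exact h ▸ hEW ⟨hm.1, fun h => hm.2 (.inr h)⟩
    obtain ⟨m, hm, hFm⟩ := honto hW
    refine ⟨m, ⟨by_contra fun hmB => (hsnk i).2 (E m) ?_, hm.2⟩, hFm⟩
    exact ⟨m, ⟨hm.1, not_or.2 ⟨hm.2, hmB⟩⟩, hFm, rfl⟩
  refine Cardinal.mk_add_le_of_mk_diff_add_le ?_
  calc #↥(A \ B) + #↥U = #(↥(A \ B) ⊕ ↥U) := Cardinal.add_def _ _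
    _ ≤ #↥(F '' (B \ A)) :=
      Cardinal.mk_le_of_injective (f := fun i => ⟨snk i, hsnkF i⟩)
        fun i j h => hinj (congrArg Subtype.val h)
    _ ≤ #↥(B \ A) := Cardinal.mk_image_le

end Society

/-! ### Towers -/

def IsContinuousChain {γ : Type*} (s : Ordinal.{u} → Set γ) (θ : Ordinal.{u}) : Prop :=
  s 0 = ∅ ∧ (∀ i j, i ≤ j → j ≤ θ → s i ⊆ s j) ∧
    ∀ i ≤ θ, Order.IsSuccLimit i → s i ⊆ ⋃ j < i, s j

/-- The `i` with `x ∈ s (i + 1) \ s i`. -/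
noncomputable def entryStage {γ : Type*} (s : Ordinal.{u} → Set γ) (x : γ) : Ordinal.{u} :=
  sInf {i | x ∈ s (i + 1)}

namespace IsContinuousChain

variable {γ : Type*} {s : Ordinal.{u} → Set γ} {θ : Ordinal.{u}} {x : γ}

theorem exists_lt_mem_add_one (hs : IsContinuousChain s θ) {k : Ordinal.{u}} (hk : k ≤ θ)
    (hx : x ∈ s k) : ∃ j < k, x ∈ s (j + 1) := by
  rcases Ordinal.zero_or_succ_or_isSuccLimit k with rfl | ⟨j, rfl⟩ | hlim
  · exact absurd (hs.1 ▸ hx) (Set.notMem_empty x)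
  · exact ⟨j, Order.lt_succ j, by rwa [← Order.succ_eq_add_one]⟩
  · obtain ⟨j, hj, hxj⟩ := Set.mem_iUnion₂.1 (hs.2.2 k hk hlim hx)
    have hj1 : j + 1 ≤ θ := (Order.add_one_le_of_lt hj).trans hk
    exact ⟨j, hj, hs.2.1 j (j + 1) le_self_add hj1 hxj⟩

theorem entryStage_lt (hs : IsContinuousChain s θ) {k : Ordinal.{u}} (hk : k ≤ θ)
    (hx : x ∈ s k) : entryStage s x < k := by
  obtain ⟨j, hj, hxj⟩ := hs.exists_lt_mem_add_one hk hx
  exact (csInf_le' (show j ∈ {i | x ∈ s (i + 1)} from hxj)).trans_lt hj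

theorem mem_entryStage_add_one (hs : IsContinuousChain s θ) (hx : x ∈ s θ) :
    x ∈ s (entryStage s x + 1) := by
  obtain ⟨j, -, hxj⟩ := hs.exists_lt_mem_add_one le_rfl hx
  exact csInf_mem (s := {i | x ∈ s (i + 1)}) ⟨j, hxj⟩

theorem notMem_entryStage (hs : IsContinuousChain s θ) (hx : x ∈ s θ) :
    x ∉ s (entryStage s x) :=
  fun h => (hs.entryStage_lt (hs.entryStage_lt le_rfl hx).le h).false

theorem mem_add_one_diff_iff (hs : IsContinuousChain s θ) {i : Ordinal.{u}} (hi : i < θ) :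
    x ∈ s (i + 1) \ s i ↔ x ∈ s θ ∧ entryStage s x = i := by
  have hi1 : i + 1 ≤ θ := Order.add_one_le_of_lt hi
  constructor
  · rintro ⟨hx1, hx0⟩
    have hxθ := hs.2.1 _ _ hi1 le_rfl hx1
    refine ⟨hxθ, le_antisymm (Order.lt_add_one_iff.1 (hs.entryStage_lt hi1 hx1)) ?_⟩
    by_contra! h
    exact hx0 (hs.2.1 _ _ (Order.add_one_le_of_lt h) hi.le (hs.mem_entryStage_add_one hxθ))
  · rintro ⟨hxθ, rfl⟩
    exact ⟨hs.mem_entryStage_add_one hxθ, hs.notMem_entryStage hxθ⟩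

end IsContinuousChain

namespace Society

variable {α β : Type u}

/-- The layer `Σ_{i+1}/Σ_i` of a tower `Σ`. -/
def layer (T : Ordinal.{u} → Society α β) (i : Ordinal.{u}) : Society α β :=
  (T (i + 1)).quot (T i)

noncomputable def manStage (T : Ordinal.{u} → Society α β) (m : α) : Ordinal.{u} :=
  entryStage (fun i => (T i).M) m

noncomputable def womanStage (T : Ordinal.{u} → Society α β) (w : β) : Ordinal.{u} :=
  entryStage (fun i => (T i).W) w

namespace IsTower

variable {Λ : Society α β} {θ : Ordinal.{u}} {T : Ordinal.{u} → Society α β}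
  {i j : Ordinal.{u}}

theorem M_mono (hT : IsTower Λ θ T) (hij : i ≤ j) (hj : j ≤ θ) : (T i).M ⊆ (T j).M := by
  rcases hij.eq_or_lt with rfl | h
  exacts [subset_rfl, (hT.2.2.1 i j h hj).1]

theorem W_mono (hT : IsTower Λ θ T) (hij : i ≤ j) (hj : j ≤ θ) : (T i).W ⊆ (T j).W := by
  rcases hij.eq_or_lt with rfl | h
  exacts [subset_rfl, (hT.2.2.1 i j h hj).2.1]

theorem K_mono (hT : IsTower Λ θ T) (hij : i ≤ j) (hj : j ≤ θ) : (T i).K ⊆ (T j).K := by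
  rcases hij.eq_or_lt with rfl | h
  · exact subset_rfl
  · rw [(hT.2.2.1 i j h hj).2.2]
    exact Set.inter_subset_left

theorem K_subset (hT : IsTower Λ θ T) (hi : i ≤ θ) : (T i).K ⊆ Λ.K := by
  rw [(hT.2.1 i hi).1.2.2]
  exact Set.inter_subset_left

theorem isContinuousChain_M (hT : IsTower Λ θ T) : IsContinuousChain (fun i => (T i).M) θ :=
  ⟨congrArg Society.M hT.1, fun _ _ => hT.M_mono,
    fun i hi hlim => (congrArg Society.M (hT.2.2.2 i hi hlim)).subset⟩

theorem isContinuousChain_W (hT : IsTower Λ θ T) : IsContinuousChain (fun i => (T i).W) θ :=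
  ⟨congrArg Society.W hT.1, fun _ _ => hT.W_mono,
    fun i hi hlim => (congrArg Society.W (hT.2.2.2 i hi hlim)).subset⟩

theorem unionLe_eq (hT : IsTower Λ θ T) : unionLe T θ = T θ := by
  have key : ∀ {γ : Type u} (s : Ordinal.{u} → Set γ), (∀ i ≤ θ, s i ⊆ s θ) →
      ⋃ i ∈ Set.Iic θ, s i = s θ :=
    fun s hs =>
      (Set.iUnion₂_subset hs).antisymm (Set.subset_biUnion_of_mem (u := s) Set.self_mem_Iic)
  exact Society.ext (key _ fun i hi => hT.M_mono hi le_rfl)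
    (key _ fun i hi => hT.W_mono hi le_rfl) (key _ fun i hi => hT.K_mono hi le_rfl)

theorem mem_layer_M_iff (hT : IsTower Λ θ T) (hi : i < θ) {m : α} :
    m ∈ (layer T i).M ↔ m ∈ (T θ).M ∧ manStage T m = i :=
  hT.isContinuousChain_M.mem_add_one_diff_iff hi

theorem mem_layer_W_iff (hT : IsTower Λ θ T) (hi : i < θ) {w : β} :
    w ∈ (layer T i).W ↔ w ∈ (T θ).W ∧ womanStage T w = i :=
  hT.isContinuousChain_W.mem_add_one_diff_iff hi

theorem manStage_lt (hT : IsTower Λ θ T) {m : α} (hm : m ∈ (T θ).M) : manStage T m < θ :=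
  hT.isContinuousChain_M.entryStage_lt le_rfl hm

theorem womanStage_lt (hT : IsTower Λ θ T) (hj : j ≤ θ) {w : β} (hw : w ∈ (T j).W) :
    womanStage T w < j :=
  hT.isContinuousChain_W.entryStage_lt hj hw

theorem mem_layer_manStage (hT : IsTower Λ θ T) {m : α} (hm : m ∈ (T θ).M) :
    m ∈ (layer T (manStage T m)).M :=
  (hT.mem_layer_M_iff (hT.manStage_lt hm)).2 ⟨hm, rfl⟩

theorem mem_layer_womanStage (hT : IsTower Λ θ T) {w : β} (hw : w ∈ (T θ).W) :
    w ∈ (layer T (womanStage T w)).W :=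
  (hT.mem_layer_W_iff (hT.womanStage_lt le_rfl hw)).2 ⟨hw, rfl⟩

theorem layer_K_subset (hT : IsTower Λ θ T) (hi : i < θ) : (layer T i).K ⊆ (T θ).K :=
  fun _ hp => hT.K_mono (Order.add_one_le_of_lt hi) le_rfl hp.1

theorem womanStage_eq_of_mem_layer_K (hT : IsTower Λ θ T) (hi : i < θ) {m : α} {w : β}
    (h : (m, w) ∈ (layer T i).K) : womanStage T w = i :=
  ((hT.mem_layer_W_iff hi).1 ((layer T i).K_mem _ h).2).2

theorem mem_layer_K (hT : IsTower Λ θ T) (hi : i < θ) {m : α} {w : β} (hmw : (m, w) ∈ Λ.K)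
    (hm : m ∈ (layer T i).M) (hw : w ∉ (T i).W) : (m, w) ∈ (layer T i).K := by
  have hi1 : i + 1 ≤ θ := Order.add_one_le_of_lt hi
  have hw1 : w ∈ (T (i + 1)).W := (hT.2.1 _ hi1).2 _ hmw hm.1
  refine ⟨?_, hm.2, hw⟩
  rw [(hT.2.1 _ hi1).1.2.2]
  exact ⟨hmw, hm.1, hw1⟩

theorem exists_erase_hasEspousal {κ : Cardinal.{u}} (hunc : ℵ₀ ≤ κ) (hT : IsTower Λ κ.ord T)
    {S : Set Ordinal.{u}} (hSθ : S ⊆ Set.Iio κ.ord) (hSne : S.Nonempty)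
    (hoff : ∀ i < κ.ord, i ∉ S → (layer T i).M = ∅)
    (ih : ∀ i ∈ S, ∃ B ⊆ (layer T i).M, #B ≤ κ ∧ ((layer T i).erase B).HasEspousal) :
    ∃ B ⊆ (T κ.ord).M, #B ≤ κ ∧ ((T κ.ord).erase B).HasEspousal := by
  have : Nonempty (α → β) := by
    obtain ⟨i, hi⟩ := hSne
    obtain ⟨-, -, -, E, -⟩ := ih i hi
    exact ⟨E⟩
  choose! Bs hBs hBκ Es hEs using ih
  set B := ⋃ i ∈ S, Bs i
  have hstage : ∀ m ∈ (T κ.ord).M \ B, manStage T m ∈ S ∧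
      m ∈ (layer T (manStage T m)).M \ Bs (manStage T m) := by
    intro m hm
    have hml := hT.mem_layer_manStage hm.1
    have hS : manStage T m ∈ S := by_contra fun h =>
      (hoff _ (hT.manStage_lt hm.1) h ▸ hml : m ∈ (∅ : Set α))
    exact ⟨hS, hml, fun hB => hm.2 (Set.mem_biUnion hS hB)⟩
  have hEs' := fun m (hm : m ∈ (T κ.ord).M \ B) => espousal_erase_iff.1 (hEs _ (hstage m hm).1)
  have hedge : ∀ m ∈ (T κ.ord).M \ B, (m, Es (manStage T m) m) ∈ (layer T (manStage T m)).K :=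
    fun m hm => (hEs' m hm).2 m (hstage m hm).2
  refine ⟨B, Set.iUnion₂_subset fun i hi m hm => ((hT.mem_layer_M_iff (hSθ hi)).1 (hBs i hi hm)).1,
    ?_, fun m => Es (manStage T m) m, espousal_erase_iff.2 ⟨fun x hx y hy hxy => ?_,
    fun m hm => hT.layer_K_subset (hT.manStage_lt hm.1) (hedge m hm)⟩⟩
  · rw [← Cardinal.lift_le.{u + 1}]
    refine (Cardinal.mk_biUnion_le_lift _ _).trans ?_
    have hS : #S ≤ Cardinal.lift.{u + 1} κ := by
      simpa using Cardinal.mk_le_mk_of_subset hSθ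
    have hB : ⨆ i : S, Cardinal.lift.{u + 1} #(Bs i) ≤ Cardinal.lift.{u + 1} κ :=
      ciSup_le' fun i => Cardinal.lift_le.2 (hBκ i i.2)
    calc _ ≤ Cardinal.lift.{u + 1} κ * Cardinal.lift.{u + 1} κ := by
          rw [Cardinal.lift_id'.{u, u + 1}]
          exact mul_le_mul' hS hB
      _ = Cardinal.lift.{u + 1} κ := Cardinal.mul_eq_self (by simpa using hunc)
  · have hstg : manStage T x = manStage T y := by
      rw [← hT.womanStage_eq_of_mem_layer_K (hT.manStage_lt hx.1) (hedge x hx),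
        ← hT.womanStage_eq_of_mem_layer_K (hT.manStage_lt hy.1) (hedge y hy)]
      exact congrArg _ hxy
    have hx' := (hstage x hx).2
    rw [hstg] at hx'
    exact (hEs' y hy).1 hx' (hstage y hy).2 (by simpa only [hstg] using hxy)

end IsTower

end Society

/-! ### Stationary sets -/

theorem isClubIn_Iio {θ : Ordinal.{u}} (hθ : Order.IsSuccLimit θ) : IsClubIn (Set.Iio θ) θ := by
  refine ⟨subset_rfl, fun A hA hAne => ?_, ?_⟩
  · rcases (csSup_le hAne fun a ha => (hA ha).le).eq_or_lt with h | h
    exacts [.inl h, .inr h]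
  · refine le_antisymm (csSup_le' fun a (ha : a < θ) => ha.le) (not_lt.1 fun h => ?_)
    exact (le_csSup ⟨θ, fun a (ha : a < θ) => ha.le⟩ (hθ.succ_lt h)).not_gt (Order.lt_succ _)

theorem IsStationaryIn.nonempty {S : Set Ordinal.{u}} {θ : Ordinal.{u}}
    (hS : IsStationaryIn S θ) (hθ : Order.IsSuccLimit θ) : S.Nonempty :=
  (hS.2 _ (isClubIn_Iio hθ)).mono Set.inter_subset_left

section Regressive

variable {κ : Cardinal.{u}} {R : Set Ordinal.{u}} {f : Ordinal.{u} → Ordinal.{u}}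

/-- Iterating `x ↦ sup {i ∈ R | f i < x} + 1` below `κ` (possible since `f` is injective and
`κ` regular) and taking the supremum gives a closure point above `b`. -/
theorem exists_gt_closurePoint (hreg : κ.IsRegular) (hunc : ℵ₀ < κ) (hR : R ⊆ Set.Iio κ.ord)
    (hf : Set.InjOn f R) {b : Ordinal.{u}} (hb : b < κ.ord) :
    ∃ a < κ.ord, b < a ∧ ∀ i ∈ R, f i < a → i < a := by
  have hθ : Order.IsSuccLimit κ.ord := Cardinal.isSuccLimit_ord hunc.le
  set g : Ordinal.{u} → Ordinal.{u} := fun x => sSup {i ∈ R | f i < x} + 1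
  have hbdd : ∀ x, BddAbove {i ∈ R | f i < x} := fun x => ⟨κ.ord, fun i hi => (hR hi.1).le⟩
  have hg : ∀ x < κ.ord, g x < κ.ord := by
    intro x hx
    refine hθ.add_one_lt (Ordinal.sSup_lt_of_lt_cof ?_ fun i hi => hR hi.1)
    rw [← Ordinal.lift_cof, hreg.cof_ord]
    calc #↥{i ∈ R | f i < x} = #↥(f '' {i ∈ R | f i < x}) :=
          (Cardinal.mk_image_eq_of_injOn _ _ (hf.mono fun i hi => hi.1)).symm
      _ ≤ #↥(Set.Iio x) := Cardinal.mk_le_mk_of_subset (Set.image_subset_iff.2 fun i hi => hi.2)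
      _ < Cardinal.lift.{u + 1} κ := by
          rw [Cardinal.mk_Iio_ordinal, Cardinal.lift_lt]
          exact Cardinal.lt_ord.1 hx
  refine ⟨Ordinal.nfp g (b + 1), Ordinal.nfp_lt_ord (by rwa [hreg.cof_ord]) hg
    (hθ.add_one_lt hb), (Order.lt_add_one_iff.2 le_rfl).trans_le (Ordinal.le_nfp _ _),
    fun i hi hfi => ?_⟩
  obtain ⟨n, hn⟩ := Ordinal.lt_nfp_iff.1 hfi
  calc i ≤ sSup {i ∈ R | f i < g^[n] (b + 1)} := le_csSup (hbdd _) ⟨hi, hn⟩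
    _ < g^[n + 1] (b + 1) := by
        rw [Function.iterate_succ_apply']
        exact Order.lt_add_one_iff.2 le_rfl
    _ ≤ Ordinal.nfp g (b + 1) := Ordinal.iterate_le_nfp _ _ _

theorem isClubIn_closurePoints (hreg : κ.IsRegular) (hunc : ℵ₀ < κ) (hR : R ⊆ Set.Iio κ.ord)
    (hf : Set.InjOn f R) {c : Ordinal.{u}} (hc : c < κ.ord) :
    IsClubIn {a | a < κ.ord ∧ c < a ∧ ∀ i ∈ R, f i < a → i < a} κ.ord := by
  set C := {a | a < κ.ord ∧ c < a ∧ ∀ i ∈ R, f i < a → i < a}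
  have hexists : ∀ b < κ.ord, ∃ a ∈ C, b < a := by
    intro b hb
    obtain ⟨a, haθ, hba, ha⟩ := exists_gt_closurePoint hreg hunc hR hf (max_lt hb hc)
    exact ⟨a, ⟨haθ, (le_max_right b c).trans_lt hba, ha⟩, (le_max_left b c).trans_lt hba⟩
  refine ⟨fun a ha => ha.1, fun A hA hAne => ?_, ?_⟩
  · have hbdd : BddAbove A := ⟨κ.ord, fun a ha => (hA ha).1.le⟩
    rcases (csSup_le hAne fun a ha => (hA ha).1.le).eq_or_lt with h | h
    · exact .inl h
    obtain ⟨a₀, ha₀⟩ := hAne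
    refine .inr ⟨h, (hA ha₀).2.1.trans_le (le_csSup hbdd ha₀), fun i hi hfi => ?_⟩
    obtain ⟨a, haA, hfa⟩ := (lt_csSup_iff hbdd ⟨a₀, ha₀⟩).1 hfi
    exact ((hA haA).2.2 i hi hfa).trans_le (le_csSup hbdd haA)
  · refine le_antisymm (csSup_le' fun a ha => ha.1.le) (not_lt.1 fun h => ?_)
    obtain ⟨a, haC, ha⟩ := hexists _ h
    exact ha.not_ge (le_csSup ⟨κ.ord, fun a ha => ha.1.le⟩ haC)

/-- A weak form of Fodor's lemma. -/
theorem IsStationaryIn.exists_gt_notMem_of_regressive (hreg : κ.IsRegular) (hunc : ℵ₀ < κ)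
    {S : Set Ordinal.{u}} (hS : IsStationaryIn S κ.ord) (hR : R ⊆ Set.Iio κ.ord)
    (hlt : ∀ i ∈ R, f i < i) (hf : Set.InjOn f R) {c : Ordinal.{u}} (hc : c < κ.ord) :
    ∃ a ∈ S, a ∉ R ∧ c < a := by
  obtain ⟨a, haS, ha⟩ := hS.2 _ (isClubIn_closurePoints hreg hunc hR hf hc)
  exact ⟨a, haS, fun haR => (ha.2.2 a haR (hlt a haR)).false, ha.2.1⟩

end Regressive

theorem Cardinal.IsRegular.lift_le_mk_of_unbounded {κ : Cardinal.{u}} (hreg : κ.IsRegular)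
    {s : Set Ordinal.{u}} (hsθ : s ⊆ Set.Iio κ.ord) (hs : ∀ c < κ.ord, ∃ a ∈ s, c < a) :
    Cardinal.lift.{u + 1} κ ≤ #s := by
  by_contra! h
  have hlt : sSup s < κ.ord :=
    Ordinal.sSup_lt_of_lt_cof (by rwa [← Ordinal.lift_cof, hreg.cof_ord]) hsθ
  obtain ⟨a, has, ha⟩ := hs _ hlt
  exact ha.not_ge (le_csSup ⟨κ.ord, fun x hx => (hsθ hx).le⟩ has)

section Counting

variable {α β : Type u} {κ : Cardinal.{u}} {S : Set Ordinal.{u}} {B : Set α} {U W : Set β}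
  {ℓ : β → Ordinal.{u}} {g : ↥S ⊕ ↥U → α ⊕ β}

/-- The indices `i ∈ S` sent into `B` are unbounded, since on the others `ℓ ∘ g` is injective and
regressive; so there are `κ` of them. -/
theorem le_mk_of_injective_regressive (hreg : κ.IsRegular) (hunc : ℵ₀ < κ)
    (hS : IsStationaryIn S κ.ord) (hg : Function.Injective g)
    (hgBW : ∀ x, Sum.elim (· ∈ B) (· ∈ W) (g x)) (hℓ : Set.InjOn ℓ W)
    (hgreg : ∀ i w, g (.inl i) = .inr w → ℓ w < i) : κ ≤ #B := by
  classical
  set S₁ := {i | ∃ h : i ∈ S, ∃ b, g (.inl ⟨i, h⟩) = .inl b}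
  set f : Ordinal.{u} → Ordinal.{u} := fun i =>
    if h : i ∈ S then Sum.elim (fun _ => 0) ℓ (g (.inl ⟨i, h⟩)) else 0
  have hfR : ∀ i (hi : i ∈ S \ S₁), ∃ w ∈ W, g (.inl ⟨i, hi.1⟩) = .inr w ∧ f i = ℓ w := by
    rintro i ⟨hiS, hiS₁⟩
    rcases hgi : g (.inl ⟨i, hiS⟩) with b | w
    · exact absurd ⟨hiS, b, hgi⟩ hiS₁
    · have hw := hgBW (.inl ⟨i, hiS⟩)
      rw [hgi] at hw
      exact ⟨w, hw, rfl, by simp [f, hiS, hgi]⟩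
  have hf_lt : ∀ i ∈ S \ S₁, f i < i := fun i hi => by
    obtain ⟨w, -, hw, hfw⟩ := hfR i hi
    exact hfw ▸ hgreg _ w hw
  have hf_inj : Set.InjOn f (S \ S₁) := fun i hi j hj hij => by
    obtain ⟨w, hwW, hw, hfw⟩ := hfR i hi
    obtain ⟨w', hwW', hw', hfw'⟩ := hfR j hj
    obtain rfl : w = w' := hℓ hwW hwW' (hfw.symm.trans (hij.trans hfw'))
    simpa using hg (hw.trans hw'.symm)
  have hS₁ : ∀ c < κ.ord, ∃ a ∈ S₁, c < a := fun c hc => by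
    obtain ⟨a, haS, haR, hca⟩ := hS.exists_gt_notMem_of_regressive hreg hunc
      (Set.sdiff_subset.trans hS.1) hf_lt hf_inj hc
    exact ⟨a, by_contra fun h => haR ⟨haS, h⟩, hca⟩
  choose hiS b hb using fun i : ↥S₁ => i.2
  have hbB : ∀ i, b i ∈ B := fun i => by simpa [hb i] using hgBW (.inl ⟨i, hiS i⟩)
  have hb_inj : Function.Injective fun i => (⟨b i, hbB i⟩ : ↥B) := fun i j hij => by
    have := hg ((hb i).trans ((congrArg (Sum.inl ∘ Subtype.val) hij).trans (hb j).symm))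
    exact Subtype.ext (by simpa using this)
  have h₁ := hreg.lift_le_mk_of_unbounded (fun i hi => hS.1 hi.1) hS₁
  have h₂ := Cardinal.lift_mk_le_lift_mk_of_injective hb_inj
  rw [Cardinal.lift_id'.{u, u + 1}] at h₂
  exact Cardinal.lift_le.1 (h₁.trans h₂)

theorem add_mk_le_of_injective_regressive (hreg : κ.IsRegular) (hunc : ℵ₀ < κ)
    (hS : IsStationaryIn S κ.ord) (hg : Function.Injective g)
    (hgBW : ∀ x, Sum.elim (· ∈ B) (· ∈ W) (g x)) (hℓ : Set.InjOn ℓ W)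
    (hℓθ : ∀ w ∈ W, ℓ w < κ.ord) (hgreg : ∀ i w, g (.inl i) = .inr w → ℓ w < i) :
    κ + #U ≤ #B := by
  have hκB := le_mk_of_injective_regressive hreg hunc hS hg hgBW hℓ hgreg
  have hB : ℵ₀ ≤ #B := hunc.le.trans hκB
  have hW : #W ≤ κ := by
    have := Cardinal.lift_mk_le_lift_mk_of_injective
      (f := fun w : W => (⟨ℓ w, hℓθ w w.2⟩ : Set.Iio κ.ord))
      fun w w' h => Subtype.ext (hℓ w.2 w'.2 (congrArg Subtype.val h))
    rw [Cardinal.mk_Iio_ordinal, Cardinal.card_ord, Cardinal.lift_lift] at this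
    exact Cardinal.lift_le.1 this
  have hgU : ∀ u, g (.inr u) ∈ Sum.inl '' B ∪ Sum.inr '' W := fun u => by
    have := hgBW (.inr u)
    rcases hgu : g (.inr u) with b | w
    · exact .inl ⟨b, by simpa [hgu] using this, rfl⟩
    · exact .inr ⟨w, by simpa [hgu] using this, rfl⟩
  have hU : #U ≤ #B + #W :=
    calc #U ≤ #↥(Sum.inl '' B ∪ Sum.inr '' W) :=
          Cardinal.mk_le_of_injective (f := fun u => ⟨g (.inr u), hgU u⟩)
            fun u u' h => Sum.inr_injective (hg (congrArg Subtype.val h))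
      _ ≤ #↥(Sum.inl '' B) + #↥(Sum.inr '' W) := Cardinal.mk_union_le _ _
      _ ≤ #B + #W := add_le_add Cardinal.mk_image_le Cardinal.mk_image_le
  calc κ + #U ≤ #B + (#B + #B) := add_le_add hκB (hU.trans (add_le_add le_rfl (hW.trans hκB)))
    _ = #B := by rw [Cardinal.add_eq_self hB, Cardinal.add_eq_self hB]

end Counting

section Chase

variable {α β : Type u} {S : Set Ordinal.{u}} {B D : Set α} {V U : Set β}
  {ℓM : α → Ordinal.{u}} {ℓW : β → Ordinal.{u}} {E : α → β} {J : β → α}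
  {tok : Ordinal.{u} → α}

open Classical in
noncomputable def chaseNode (S : Set Ordinal.{u}) (ℓW : β → Ordinal.{u}) (J : β → α) (w : β) :
    α ⊕ β :=
  if ℓW w ∈ S then .inl (J w) else .inr w

theorem chaseNode_injOn (hJ : Set.InjOn J {w ∈ V | ℓW w ∈ S}) :
    Set.InjOn (chaseNode S ℓW J) V := by
  intro w hw w' hw' h
  by_cases h₁ : ℓW w ∈ S <;> by_cases h₂ : ℓW w' ∈ S <;> simp [chaseNode, h₁, h₂] at h
  · exact hJ ⟨hw, h₁⟩ ⟨hw', h₂⟩ h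
  · exact h

theorem rank_chaseNode (hJrank : ∀ w ∈ V, ℓW w ∈ S → ℓM (J w) = ℓW w) {w : β} (hw : w ∈ V) :
    Sum.elim ℓM ℓW (chaseNode S ℓW J w) = ℓW w := by
  unfold chaseNode
  split_ifs with h
  exacts [hJrank w hw h, rfl]

theorem chaseNode_mem (hJBD : ∀ w ∈ V, ℓW w ∈ S → J w ∈ B ∪ D) {w : β} (hw : w ∈ V) :
    Sum.elim (· ∈ B ∪ D) (fun w => w ∈ V ∧ ℓW w ∉ S) (chaseNode S ℓW J w) := by
  unfold chaseNode
  split_ifs with h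
  exacts [hJBD w hw h, ⟨hw, h⟩]

theorem chaseNode_ne_inl (htokJ : ∀ i ∈ S, ∀ w ∈ V, ℓW w ∈ S → J w ≠ tok i) {i : Ordinal.{u}}
    (hi : i ∈ S) {w : β} (hw : w ∈ V) : chaseNode S ℓW J w ≠ .inl (tok i) := by
  intro h
  by_cases hwS : ℓW w ∈ S <;> simp [chaseNode, hwS] at h
  exact htokJ i hi w hw hwS h

/-- The edges `inl b ↦ chaseNode (E b)` for `b ∈ D` lower the rank `Sum.elim ℓM ℓW` and are
injective, so the walks from the tokens `tok i` and from the women of `U` end at distinct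
sinks: men of `B` or women of layers outside `S`. -/
theorem exists_injective_chase (hE : Set.InjOn E D) (hED : ∀ b ∈ D, E b ∈ V ∧ ℓW (E b) < ℓM b)
    (hJ : Set.InjOn J {w ∈ V | ℓW w ∈ S})
    (hJBD : ∀ w ∈ V, ℓW w ∈ S → J w ∈ B ∪ D) (hJrank : ∀ w ∈ V, ℓW w ∈ S → ℓM (J w) = ℓW w)
    (htok : ∀ i ∈ S, tok i ∈ B ∪ D ∧ ℓM (tok i) = i)
    (htokJ : ∀ i ∈ S, ∀ w ∈ V, ℓW w ∈ S → J w ≠ tok i) (hUV : U ⊆ V)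
    (hUE : ∀ u ∈ U, u ∉ E '' D) :
    ∃ g : ↥S ⊕ ↥U → α ⊕ β, Function.Injective g ∧
      (∀ x, Sum.elim (· ∈ B) (fun w => w ∈ V ∧ ℓW w ∉ S) (g x)) ∧
      ∀ i w, g (.inl i) = .inr w → ℓW w < i := by
  set node := chaseNode S ℓW J
  set rank := Sum.elim ℓM ℓW
  set r : α ⊕ β → α ⊕ β → Prop := fun x y => ∃ b ∈ D, x = .inl b ∧ y = node (E b)
  have hr_rank : ∀ x y, r x y → rank y < rank x := by
    rintro _ _ ⟨b, hb, rfl, rfl⟩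
    exact (rank_chaseNode hJrank (hED b hb).1).trans_lt (hED b hb).2
  have hr : Relator.LeftUnique r := by
    rintro _ _ _ ⟨b, hb, rfl, rfl⟩ ⟨b', hb', rfl, h⟩
    rw [hE hb' hb (chaseNode_injOn hJ (hED b' hb').1 (hED b hb).1 h.symm)]
  set src : ↥S ⊕ ↥U → α ⊕ β := Sum.elim (fun i => .inl (tok i)) (fun u => node u)
  have hsrc : Function.Injective src := by
    rintro (i | u) (i' | u') h
    · exact congrArg _ (Subtype.ext ((htok i i.2).2.symm.trans
        ((congrArg ℓM (Sum.inl.inj h)).trans (htok i' i'.2).2)))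
    · exact absurd h.symm (chaseNode_ne_inl htokJ i.2 (hUV u'.2))
    · exact absurd h (chaseNode_ne_inl htokJ i'.2 (hUV u.2))
    · exact congrArg _ (Subtype.ext (chaseNode_injOn hJ (hUV u.2) (hUV u'.2) h))
  have hsource : ∀ x z, ¬ r z (src x) := by
    rintro (i | u) _ ⟨b, hb, rfl, h⟩
    · exact chaseNode_ne_inl htokJ i.2 (hED b hb).1 h.symm
    · exact hUE u u.2 ⟨b, hb, chaseNode_injOn hJ (hED b hb).1 (hUV u.2) h.symm⟩
  have hwf : WellFounded (flip r) :=
    Subrelation.wf (fun {x y} h => hr_rank y x h) (InvImage.wf rank wellFounded_lt)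
  obtain ⟨g, hg, hsnk⟩ := Relation.exists_injective_reflTransGen_sink hr hsrc hsource
    fun x => Relation.exists_reflTransGen_forall_not hwf (src x)
  refine ⟨g, hg, fun x => ?_, fun i w h => ?_⟩
  · have hinv : Sum.elim (· ∈ B ∪ D) (fun w => w ∈ V ∧ ℓW w ∉ S) (g x) := by
      rcases (hsnk x).1.cases_tail with h | ⟨-, -, b, hb, -, h⟩
      · rw [h]
        rcases x with i | u
        exacts [(htok i i.2).1, chaseNode_mem hJBD (hUV u.2)]
      · rw [h]
        exact chaseNode_mem hJBD (hED b hb).1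
    rcases hgx : g x with b | w
    · rw [hgx] at hinv
      exact hinv.resolve_right fun hbD => (hsnk x).2 _ ⟨b, hbD, hgx, rfl⟩
    · rwa [hgx] at hinv
  · rcases (hsnk (.inl i)).1.eq_or_lt hr_rank with h' | h'
    · rw [h] at h'
      exact absurd h' Sum.inr_ne_inl
    · rw [h] at h'
      exact h'.trans_eq (htok i i.2).2

end Chase

/-! ### Unmatched women in the layers of a tower -/

namespace Society

variable {α β : Type u} {Λ : Society α β} {T : Ordinal.{u} → Society α β} {θ : Ordinal.{u}}
  {B : Set α} {E : α → β} {i : Ordinal.{u}}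

def backMatched (T : Ordinal.{u} → Society α β) (θ : Ordinal.{u}) (B : Set α) (E : α → β) :
    Set α :=
  {m | m ∈ (T θ).M \ B ∧ E m ∈ (T (manStage T m)).W}

def layerUnmatched (T : Ordinal.{u} → Society α β) (θ : Ordinal.{u}) (B : Set α) (E : α → β) :
    Set β :=
  {w | w ∈ (T θ).W ∧ ∀ m ∈ (T θ).M \ (B ∪ backMatched T θ B E), E m = w →
    manStage T m ≠ womanStage T w}

theorem IsTower.mem_layer_M_diff (hT : IsTower Λ θ T) (hi : i < θ) {X : Set α} {m : α} :
    m ∈ (layer T i).M \ (X ∩ (layer T i).M) ↔ m ∈ (T θ).M \ X ∧ manStage T m = i := by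
  simp only [Set.sdiff_inter_self_eq_sdiff, Set.mem_sdiff, hT.mem_layer_M_iff hi]
  tauto

/-- Saturation keeps the partner of a man who is not back-matched inside his layer. -/
theorem IsTower.espousal_layer_erase (hT : IsTower Λ θ T) (hE : ((T θ).erase B).Espousal E)
    (hi : i < θ) :
    ((layer T i).erase ((B ∪ backMatched T θ B E) ∩ (layer T i).M)).Espousal E := by
  obtain ⟨hinj, hK⟩ := espousal_erase_iff.1 hE
  have hmem : ∀ m ∈ (layer T i).M \ ((B ∪ backMatched T θ B E) ∩ (layer T i).M),
      m ∈ (T θ).M \ B ∧ manStage T m = i ∧ m ∉ backMatched T θ B E := fun m hm => by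
    obtain ⟨⟨hmθ, hmBD⟩, hstage⟩ := (hT.mem_layer_M_diff hi).1 hm
    exact ⟨⟨hmθ, fun h => hmBD (.inl h)⟩, hstage, fun h => hmBD (.inr h)⟩
  refine espousal_erase_iff.2 ⟨fun x hx y hy => hinj (hmem x hx).1 (hmem y hy).1, fun m hm => ?_⟩
  obtain ⟨hm', hstage, hmD⟩ := hmem m hm
  exact hT.mem_layer_K hi (hT.K_subset le_rfl (hK m hm')) hm.1 fun hw => hmD ⟨hm', hstage ▸ hw⟩

theorem IsTower.mem_layer_unmatched_iff (hT : IsTower Λ θ T) (hi : i < θ) {w : β} :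
    w ∈ (layer T i).W \ E '' ((layer T i).M \ ((B ∪ backMatched T θ B E) ∩ (layer T i).M)) ↔
      w ∈ layerUnmatched T θ B E ∧ womanStage T w = i := by
  simp only [Set.mem_sdiff, hT.mem_layer_W_iff hi, Set.mem_image, hT.mem_layer_M_diff hi,
    layerUnmatched, Set.mem_ofPred_eq]
  constructor
  · rintro ⟨⟨hw, rfl⟩, hne⟩
    exact ⟨⟨hw, fun m hm hmw hstage => hne ⟨m, ⟨hm, hstage⟩, hmw⟩⟩, rfl⟩
  · rintro ⟨⟨hw, hne⟩, rfl⟩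
    exact ⟨⟨hw, rfl⟩, fun ⟨m, ⟨hm, hstage⟩, hmw⟩ => hne m hm hmw hstage⟩

theorem mem_layerUnmatched_of_unmatched {w : β}
    (hw : w ∈ (T θ).W \ E '' ((T θ).M \ B)) : w ∈ layerUnmatched T θ B E :=
  ⟨hw.1, fun m hm hmw _ => hw.2 ⟨m, ⟨hm.1, fun h => hm.2 (.inl h)⟩, hmw⟩⟩

theorem IsTower.womanStage_apply_lt (hT : IsTower Λ θ T) {b : α}
    (hb : b ∈ backMatched T θ B E) : womanStage T (E b) < manStage T b :=
  hT.womanStage_lt (hT.manStage_lt hb.1.1).le hb.2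

theorem IsTower.apply_mem_layerUnmatched (hT : IsTower Λ θ T) (hE : ((T θ).erase B).Espousal E)
    {b : α} (hb : b ∈ backMatched T θ B E) : E b ∈ layerUnmatched T θ B E := by
  refine ⟨hT.W_mono (hT.manStage_lt hb.1.1).le le_rfl hb.2, fun m hm hmb hstage => ?_⟩
  obtain rfl : m = b := (espousal_erase_iff.1 hE).1 ⟨hm.1, fun h => hm.2 (.inl h)⟩ hb.1 hmb
  exact (hT.womanStage_apply_lt hb).ne hstage.symm

theorem IsTower.exists_token_injOn (hT : IsTower Λ θ T) (hi : i < θ)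
    (h : 1 + #↥((layer T i).W \
      E '' ((layer T i).M \ ((B ∪ backMatched T θ B E) ∩ (layer T i).M))) ≤
      #↥((B ∪ backMatched T θ B E) ∩ (layer T i).M)) :
    ∃ (t : α) (f : β → α), (t ∈ B ∪ backMatched T θ B E ∧ manStage T t = i) ∧
      (∀ w ∈ layerUnmatched T θ B E, womanStage T w = i →
        f w ∈ B ∪ backMatched T θ B E ∧ manStage T (f w) = i ∧ f w ≠ t) ∧
      Set.InjOn f {w ∈ layerUnmatched T θ B E | womanStage T w = i} := by
  obtain ⟨t, ht, f, hf, hinj⟩ := Set.exists_injOn_mapsTo_diff_singleton h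
  have hdel : ∀ m ∈ (B ∪ backMatched T θ B E) ∩ (layer T i).M,
      m ∈ B ∪ backMatched T θ B E ∧ manStage T m = i :=
    fun m hm => ⟨hm.1, ((hT.mem_layer_M_iff hi).1 hm.2).2⟩
  refine ⟨t, f, hdel t ht, fun w hw hwi => ?_, fun w hw w' hw' => ?_⟩
  · obtain ⟨hfw, hft⟩ := hf ((hT.mem_layer_unmatched_iff hi).2 ⟨hw, hwi⟩)
    exact ⟨(hdel _ hfw).1, (hdel _ hfw).2, hft⟩
  · exact hinj ((hT.mem_layer_unmatched_iff hi).2 hw) ((hT.mem_layer_unmatched_iff hi).2 hw')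

theorem IsTower.add_mk_unmatched_le {κ : Cardinal.{u}} (hreg : κ.IsRegular) (hunc : ℵ₀ < κ)
    (hT : IsTower Λ κ.ord T) {S : Set Ordinal.{u}} (hS : IsStationaryIn S κ.ord)
    (hoff : ∀ i < κ.ord, i ∉ S → (layer T i).W.Subsingleton)
    (ih : ∀ i ∈ S, ∀ (B' : Set α) (E' : α → β), ((layer T i).erase B').Espousal E' →
      1 + #↥((layer T i).W \ E' '' ((layer T i).M \ B')) ≤ #B')
    (hE : ((T κ.ord).erase B).Espousal E) :
    κ + #↥((T κ.ord).W \ E '' ((T κ.ord).M \ B)) ≤ #B := by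
  set D := backMatched T κ.ord B E
  set V := layerUnmatched T κ.ord B E
  have htoken := fun i (hi : i ∈ S) =>
    hT.exists_token_injOn (hS.1 hi) (ih i hi _ E (hT.espousal_layer_erase hE (hS.1 hi)))
  have : Nonempty α := by
    obtain ⟨i, hi⟩ := hS.nonempty (Cardinal.isSuccLimit_ord hunc.le)
    obtain ⟨t, -⟩ := htoken i hi
    exact ⟨t⟩
  choose! tok Jf htok hJf hJinj using htoken
  set J := fun w => Jf (womanStage T w) w
  have hJBD : ∀ w ∈ V, womanStage T w ∈ S → J w ∈ B ∪ D :=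
    fun w hw hwS => (hJf _ hwS w hw rfl).1
  have hJrank : ∀ w ∈ V, womanStage T w ∈ S → manStage T (J w) = womanStage T w :=
    fun w hw hwS => (hJf _ hwS w hw rfl).2.1
  have hJ : Set.InjOn J {w ∈ V | womanStage T w ∈ S} := by
    rintro w ⟨hw, hwS⟩ w' ⟨hw', hw'S⟩ h
    have hstage : womanStage T w = womanStage T w' := by
      rw [← hJrank w hw hwS, ← hJrank w' hw' hw'S]
      exact congrArg _ h
    exact hJinj _ hwS ⟨hw, rfl⟩ ⟨hw', hstage.symm⟩ (by simpa [J, hstage] using h)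
  have htokJ : ∀ i ∈ S, ∀ w ∈ V, womanStage T w ∈ S → J w ≠ tok i := by
    intro i hi w hw hwS h
    have hstage : womanStage T w = i := by rw [← hJrank w hw hwS, h, (htok i hi).2]
    exact (hJf i hi w hw hstage).2.2 (by simpa [J, hstage] using h)
  have hℓ : Set.InjOn (womanStage T) {w | w ∈ V ∧ womanStage T w ∉ S} := by
    rintro w ⟨hw, hwS⟩ w' ⟨hw', -⟩ h
    exact hoff _ (hT.womanStage_lt le_rfl hw.1) hwS (hT.mem_layer_womanStage hw.1)
      (h ▸ hT.mem_layer_womanStage hw'.1)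
  obtain ⟨g, hg, hgBW, hgreg⟩ := exists_injective_chase
    ((espousal_erase_iff.1 hE).1.mono fun b hb => hb.1)
    (fun b hb => ⟨hT.apply_mem_layerUnmatched hE hb, hT.womanStage_apply_lt hb⟩)
    hJ hJBD hJrank htok htokJ (fun u hu => mem_layerUnmatched_of_unmatched hu)
    (fun u hu ⟨b, hb, hbu⟩ => hu.2 ⟨b, hb.1, hbu⟩)
  exact add_mk_le_of_injective_regressive hreg hunc hS hg hgBW hℓ
    (fun w hw => hT.womanStage_lt le_rfl hw.1.1) hgreg

end Society

/-! ### Obstructions -/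

namespace IsObstruction

variable {α β : Type u} {κ : Cardinal.{u}} {Φ Λ : Society α β}

theorem one_le (h : IsObstruction κ Φ Λ) : 1 ≤ κ := by
  cases h with
  | small h1 => exact h1
  | large _ _ _ hunc => exact (Cardinal.one_lt_aleph0.trans hunc).le

theorem exists_erase_hasEspousal (h : IsObstruction κ Φ Λ) :
    ∃ B ⊆ Φ.M, #B ≤ κ ∧ (Φ.erase B).HasEspousal := by
  induction h with
  | small _ _ _ hA =>
    obtain ⟨A, hAM, hAκ, hcrit⟩ := hA
    exact ⟨A, hAM, hAκ.le, hcrit.1⟩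
  | large T S _ hunc htower μ hμ _ hoff hstat hunion ih =>
    subst hunion
    rw [htower.unionLe_eq]
    refine htower.exists_erase_hasEspousal hunc.le hstat.1
      (hstat.nonempty (Cardinal.isSuccLimit_ord hunc.le)) (fun i hi hiS => ?_) fun i hi => ?_
    · obtain ⟨w, -, hw⟩ := hoff i hi hiS
      exact congrArg Society.M hw
    · obtain ⟨B, hB, hBμ, hesp⟩ := ih i hi
      exact ⟨B, hB, hBμ.trans (hμ i hi).le, hesp⟩

theorem add_mk_unmatched_le (h : IsObstruction κ Φ Λ) {B : Set α} {E : α → β}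
    (hE : (Φ.erase B).Espousal E) : κ + #↥(Φ.W \ E '' (Φ.M \ B)) ≤ #B := by
  induction h generalizing B E with
  | small _ _ _ hA =>
    obtain ⟨A, hAM, rfl, hcrit⟩ := hA
    exact hcrit.mk_add_mk_unmatched_le hAM hE
  | large T S hreg hunc htower μ _ hS hoff hstat hunion ih =>
    subst hunion
    rw [htower.unionLe_eq] at hE ⊢
    refine htower.add_mk_unmatched_le hreg hunc hstat (fun i hi hiS => ?_)
      (fun i hi B' E' hE' => (add_le_add (hS i hi).one_le le_rfl).trans (ih i hi hE')) hE
    obtain ⟨w, -, hw⟩ := hoff i hi hiS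
    exact congrArg Society.W hw ▸ Set.subsingleton_singleton

end IsObstruction

/-- If `Φ` is a `κ`-obstruction in a society `Λ`, then `δ(Φ) = κ`. -/
theorem delta_of_obstruction {α β : Type u} (Λ Φ : Society α β) (κ : Cardinal.{u})
    (h : IsObstruction κ Φ Λ) : Φ.delta = κ := by
  obtain ⟨B, hB, hBκ, hesp⟩ := h.exists_erase_hasEspousal
  have hmem : #B ∈ {c | ∃ B ⊆ Φ.M, #B = c ∧ (Φ.erase B).HasEspousal} := ⟨B, hB, rfl, hesp⟩
  refine le_antisymm ((csInf_le' hmem).trans hBκ) (le_csInf ⟨_, hmem⟩ ?_)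
  rintro _ ⟨B', -, rfl, E, hE⟩
  exact (self_le_add_right κ _).trans (h.add_mk_unmatched_le hE)
end

section
/- Every finite geometric lattice of rank at least 2 has a matching. -/
universe u

/-- An element of a poset is an *atom* (point) if it is an upper cover of a least element. -/
def IsAtomP {P : Type*} [PartialOrder P] (a : P) : Prop :=
  ∃ z : P, (∀ w, z ≤ w) ∧ z ⋖ a

/-- An element of a poset is a *coatom* (hyperplane) if it is a lower cover of a greatest
element. -/
def IsCoatomP {P : Type*} [PartialOrder P] (a : P) : Prop :=
  ∃ z : P, (∀ w, w ≤ z) ∧ a ⋖ z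

/-- A partial order is a *geometric lattice of finite height* if it is a lattice
(binary joins and meets exist), has no infinite chains, is semimodular, and every
element is a join (least upper bound) of a set of atoms. -/
def IsGeomLatFH (P : Type*) [PartialOrder P] : Prop :=
  (∀ x y : P, ∃ z, IsLUB {x, y} z) ∧
  (∀ x y : P, ∃ z, IsGLB {x, y} z) ∧
  (∀ c : Set P, IsChain (· ≤ ·) c → c.Finite) ∧
  (∀ a b c : P, a ⋖ b → a ⋖ c → b ≠ c → ∃ d, b ⋖ d ∧ c ⋖ d) ∧
  (∀ x : P, ∃ S : Set P, (∀ a ∈ S, IsAtomP a) ∧ IsLUB S x)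

/-- `r` is the rank (height) function of a graded bounded poset: `r ⊥ = 0` and `r`
increases by exactly one across covering pairs. -/
def IsRankFn {L : Type*} [PartialOrder L] [OrderBot L] (r : L → ℕ) : Prop :=
  r ⊥ = 0 ∧ ∀ x y : L, x ⋖ y → r y = r x + 1

/-- A *matching* of a lattice: an injection from atoms to coatoms (hyperplanes) such
that each atom lies below its image. -/
def HasMatching (L : Type*) [CompleteLattice L] : Prop :=
  ∃ f : {a : L // IsAtom a} → {h : L // IsCoatom h},
    Function.Injective f ∧ ∀ a : {a : L // IsAtom a}, (a : L) ≤ ((f a : {h : L // IsCoatom h}) : L)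

/-!
By Hall's theorem it suffices that the atom–hyperplane incidence matrix has linearly independent
rows. Let `g` be a weighting of the atoms whose sum over every hyperplane vanishes. Pairing these
relations with the Möbius values `μ(x, H)` and evaluating the resulting sums with Weisner's theorem
gives, for every `x`,
`(μ(x, ⊤) + ∑_H μ(x, H)) · ∑_a g(a) = μ(x, ⊤) · ∑_{a ≤ x} g(a)`.
By Rota's sign theorem `(-1)^(r x + r y) μ(x, y) > 0`, so for `x = ⊥` the coefficient, which equals
the sum of `μ(⊥, H)` over the hyperplanes through any fixed atom, is nonzero and `∑ g = 0`;
then `x = b` gives `μ(b, ⊤) g(b) = 0` for every atom `b`.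
-/

open Finset

section UpperModular

variable {L : Type*} [Lattice L]

theorem isUpperModularLattice_of_covBy_diamond [WellFoundedLT L] [IsStronglyCoatomic L]
    (h : ∀ a b c : L, a ⋖ b → a ⋖ c → b ≠ c → ∃ d, b ⋖ d ∧ c ⋖ d) :
    IsUpperModularLattice L := by
  refine ⟨fun {a b} => ?_⟩
  induction b using WellFoundedLT.induction with
  | _ b ih =>
  intro hab
  have hab' : ¬ a ≤ b := fun hle => hab.lt.ne (inf_eq_left.2 hle)
  rcases (inf_le_right : a ⊓ b ≤ b).eq_or_lt with hb | hb
  · rwa [hb, ← sup_eq_left.2 (inf_eq_right.1 hb)] at hab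
  obtain ⟨c, hc, hcb⟩ := exists_le_covBy_of_lt hb
  have hac : a ⊓ c = a ⊓ b := le_antisymm (inf_le_inf_left a hcb.le) (le_inf inf_le_left hc)
  have hca : c ⋖ a ⊔ c := ih c hcb.lt (hac ▸ hab)
  obtain ⟨d, hbd, hd⟩ := h c b (a ⊔ c) hcb hca fun he => hab' (he ▸ le_sup_left)
  have had : a ⊔ b = d := ((hbd.eq_or_eq le_sup_right
    (sup_le (le_sup_left.trans hd.le) hbd.le)).resolve_left fun he => hab' (he ▸ le_sup_left))
  exact had ▸ hbd

variable [OrderBot L] [IsUpperModularLattice L] {a w : L}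

theorem IsAtom.covBy_sup_of_not_le (ha : IsAtom a) (haw : ¬ a ≤ w) : w ⋖ w ⊔ a := by
  have hinf : a ⊓ w = ⊥ := disjoint_iff.1 (ha.not_le_iff_disjoint.1 haw)
  rw [sup_comm]
  exact covBy_sup_of_inf_covBy_left (hinf ▸ ha.bot_covBy)

theorem IsAtom.sup_eq_top_iff [OrderTop L] (ha : IsAtom a) :
    w ⊔ a = ⊤ ↔ w = ⊤ ∨ IsCoatom w ∧ ¬ a ≤ w := by
  constructor
  · intro h
    by_cases hw : w = ⊤
    · exact .inl hw
    have haw : ¬ a ≤ w := fun hle => hw (by rwa [sup_eq_left.2 hle] at h)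
    exact .inr ⟨covBy_top_iff.1 (h ▸ ha.covBy_sup_of_not_le haw), haw⟩
  · rintro (rfl | ⟨hw, haw⟩)
    · exact top_sup_eq a
    · exact hw.2 _ (left_lt_sup.2 haw)

end UpperModular

theorem isAtom_of_isAtomP {P : Type*} [PartialOrder P] [OrderBot P] {a : P} (ha : IsAtomP a) :
    IsAtom a := by
  obtain ⟨z, hz, hza⟩ := ha
  rwa [le_antisymm (hz ⊥) bot_le, bot_covBy_iff] at hza

theorem IsGeomLatFH.isAtomistic {P : Type*} [Lattice P] [OrderBot P] (hP : IsGeomLatFH P) :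
    IsAtomistic P :=
  ⟨fun x => (hP.2.2.2.2 x).imp fun _ ⟨hS, hx⟩ => ⟨hx, fun a ha => isAtom_of_isAtomP (hS a ha)⟩⟩

theorem IsGeomLatFH.isUpperModularLattice {P : Type*} [Lattice P] [Finite P]
    (hP : IsGeomLatFH P) : IsUpperModularLattice P :=
  isUpperModularLattice_of_covBy_diamond hP.2.2.2.1

theorem exists_isCoatom_le_of_isAtom {L : Type*} [PartialOrder L] [BoundedOrder L] [IsCoatomic L]
    {r : L → ℕ} (hr0 : r ⊥ = 0) (hr : ∀ x y : L, x ⋖ y → r y = r x + 1) (hrank : 2 ≤ r ⊤)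
    {b : L} (hb : IsAtom b) : ∃ h, IsCoatom h ∧ b ≤ h := by
  refine (eq_top_or_exists_le_coatom b).resolve_left fun hbt => ?_
  have := hr ⊥ b hb.bot_covBy
  rw [hbt, hr0] at this
  omega

theorem exists_injective_of_linearIndependent {α β K : Type*} [Fintype β] [Field K]
    (r : α → β → Prop) [DecidableRel r]
    (hr : LinearIndependent K fun a b => if r a b then (1 : K) else 0) :
    ∃ f : α → β, Function.Injective f ∧ ∀ a, r a (f a) := by
  classical
  refine (Fintype.all_card_le_filter_rel_iff_exists_injective r).1 fun A => ?_
  set N : Finset β := {b | ∃ a ∈ A, r a b}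
  have hind : LinearIndependent K fun (a : A) (b : N) => if r a b then (1 : K) else 0 := by
    refine Fintype.linearIndependent_iff.2 fun c hc => ?_
    refine Fintype.linearIndependent_iff.1 (hr.comp _ Subtype.val_injective) c (funext fun b => ?_)
    by_cases hb : b ∈ N
    · simpa using congr_fun hc ⟨b, hb⟩
    · have : ∀ a ∈ A, ¬ r a b := fun a ha hab => hb (mem_filter.2 ⟨mem_univ b, a, ha, hab⟩)
      simp [this]
  simpa using hind.fintype_card_le_finrank

namespace IncidenceAlgebra

open scoped Classical

variable {L : Type*} [Lattice L] [LocallyFiniteOrder L]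

local notation "μ" => mu ℚ

theorem sum_Icc_mu_filter_sup_eq {x p : L} (hpx : ¬ p ≤ x) (y : L) :
    ∑ w ∈ Icc x y with w ⊔ p = y, μ x w = 0 := by
  calc ∑ w ∈ Icc x y with w ⊔ p = y, μ x w
      = ∑ w ∈ Icc x y, ∑ z ∈ Icc (w ⊔ p) y, μ x w * μ z y := by
        rw [sum_filter]
        refine sum_congr rfl fun w _ => ?_
        rw [← mul_sum, sum_Icc_mu_left]
        split_ifs <;> simp
    _ = ∑ z ∈ Icc (x ⊔ p) y, ∑ w ∈ Icc x z, μ x w * μ z y := by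
        refine sum_comm' fun w z => ?_
        simp only [mem_Icc, sup_le_iff]
        exact ⟨fun ⟨⟨hxw, _⟩, ⟨hwz, hpz⟩, hzy⟩ => ⟨⟨hxw, hwz⟩, ⟨hxw.trans hwz, hpz⟩, hzy⟩,
          fun ⟨⟨hxw, hwz⟩, ⟨_, hpz⟩, hzy⟩ => ⟨⟨hxw, hwz.trans hzy⟩, ⟨hwz, hpz⟩, hzy⟩⟩
    _ = 0 := sum_eq_zero fun z hz => by
        have hxz : x ≠ z := fun he => hpx (he ▸ (le_sup_right.trans (mem_Icc.1 hz).1))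
        rw [← sum_mul, sum_Icc_mu_right, if_neg hxz, zero_mul]

section Geometric

variable [OrderBot L] [IsUpperModularLattice L] [IsAtomistic L] [Finite L]

theorem neg_one_pow_mul_mu_pos {r : L → ℕ} (hr : ∀ x y : L, x ⋖ y → r y = r x + 1) {x y : L}
    (hxy : x ≤ y) : 0 < (-1 : ℚ) ^ (r x + r y) * μ x y := by
  induction y using WellFoundedLT.induction with
  | _ y ih =>
  rcases hxy.eq_or_lt with rfl | hlt
  · rw [mu_self, mul_one, ← two_mul, pow_mul]
    norm_num
  obtain ⟨w, hxw, hwy⟩ := exists_le_covBy_of_lt hlt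
  obtain ⟨p, hp, hpy, hpw⟩ : ∃ p, IsAtom p ∧ p ≤ y ∧ ¬ p ≤ w := by
    simpa using mt le_iff_atom_le_imp.2 hwy.lt.not_ge
  -- In Weisner's identity for `p`, the terms other than `μ x y` come from lower covers of `y`.
  have hsum := sum_Icc_mu_filter_sup_eq (fun hpx => hpw (hpx.trans hxw)) y
  rw [← Ico_insert_right hxy, filter_insert, if_pos (sup_eq_left.2 hpy),
    sum_insert (by simp)] at hsum
  set s := {v ∈ Ico x y | v ⊔ p = y}
  have hcov : ∀ v ∈ s, x ≤ v ∧ v ⋖ y := by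
    intro v hv
    obtain ⟨⟨hxv, hvy⟩, hvp⟩ := by simpa only [s, mem_filter, mem_Ico] using hv
    have hpv : ¬ p ≤ v := fun hle => hvy.ne (by rwa [sup_eq_left.2 hle] at hvp)
    exact ⟨hxv, hvp ▸ hp.covBy_sup_of_not_le hpv⟩
  have hrec : (-1 : ℚ) ^ (r x + r y) * μ x y
      = ∑ v ∈ s, (-1 : ℚ) ^ (r x + r v) * μ x v := by
    rw [eq_neg_of_add_eq_zero_left hsum, mul_neg, mul_sum, ← sum_neg_distrib]
    refine sum_congr rfl fun v hv => ?_
    rw [hr v y (hcov v hv).2, ← add_assoc, pow_succ]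
    ring
  rw [hrec]
  refine sum_pos (fun v hv => ih v (hcov v hv).2.lt (hcov v hv).1) ⟨w, ?_⟩
  have hwp : w ⊔ p = y := (hwy.eq_or_eq le_sup_left (sup_le hwy.le hpy)).resolve_left
    fun he => hpw (he ▸ le_sup_right)
  simpa [s, hxw, hwy.lt] using hwp

theorem mu_ne_zero {r : L → ℕ} (hr : ∀ x y : L, x ⋖ y → r y = r x + 1) {x y : L} (hxy : x ≤ y) :
    μ x y ≠ 0 :=
  right_ne_zero_of_mul (neg_one_pow_mul_mu_pos hr hxy).ne'

theorem sum_mu_ne_zero_of_isCoatom [OrderTop L] {r : L → ℕ}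
    (hr : ∀ x y : L, x ⋖ y → r y = r x + 1) {x : L} {s : Finset L} (hs : s.Nonempty)
    (hsx : ∀ h ∈ s, x ≤ h ∧ IsCoatom h) : ∑ h ∈ s, μ x h ≠ 0 := by
  have hpos : 0 < (-1 : ℚ) ^ (r x + r ⊤ + 1) * ∑ h ∈ s, μ x h := by
    rw [mul_sum]
    refine sum_pos (fun h hh => ?_) hs
    rw [hr h ⊤ (hsx h hh).2.covBy_top, show r x + (r h + 1) + 1 = r x + r h + 2 by ring, pow_add,
      neg_one_sq, mul_one]
    exact neg_one_pow_mul_mu_pos hr (hsx h hh).1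
  exact right_ne_zero_of_mul hpos.ne'

end Geometric

section Coatoms

variable [BoundedOrder L] [IsUpperModularLattice L]

theorem mu_top_add_sum_isCoatom_not_le {x a : L} (ha : IsAtom a) (hax : ¬ a ≤ x) :
    μ x ⊤ + ∑ h ∈ Icc x ⊤ with IsCoatom h ∧ ¬ a ≤ h, μ x h = 0 := by
  have hsplit : {w ∈ Icc x ⊤ | w ⊔ a = ⊤} = insert ⊤ {h ∈ Icc x ⊤ | IsCoatom h ∧ ¬ a ≤ h} := by
    ext w
    simp only [mem_filter, mem_insert, mem_Icc, ha.sup_eq_top_iff]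
    constructor
    · rintro ⟨hw, rfl | hco⟩
      exacts [.inl rfl, .inr ⟨hw, hco⟩]
    · rintro (rfl | ⟨hw, hco⟩)
      exacts [⟨⟨le_top, le_rfl⟩, .inl rfl⟩, ⟨hw, .inr hco⟩]
  rw [← sum_Icc_mu_filter_sup_eq hax ⊤, hsplit, sum_insert fun h => (mem_filter.1 h).2.1.1 rfl]

theorem sum_mu_isCoatom_and_le {x a : L} (ha : IsAtom a) :
    ∑ h ∈ Icc x ⊤ with IsCoatom h ∧ a ≤ h, μ x h
      = μ x ⊤ + ∑ h ∈ Icc x ⊤ with IsCoatom h, μ x h - if a ≤ x then μ x ⊤ else 0 := by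
  split_ifs with hax
  · rw [add_sub_cancel_left]
    exact sum_congr (filter_congr fun h hh => and_iff_left (hax.trans (mem_Icc.1 hh).1))
      fun _ _ => rfl
  · have hsplit := sum_filter_add_sum_filter_not {h ∈ Icc x ⊤ | IsCoatom h} (a ≤ ·) (μ x)
    simp only [filter_filter] at hsplit
    linarith [mu_top_add_sum_isCoatom_not_le ha hax]

theorem mu_top_add_sum_isCoatom_mul_sum [Fintype L] {g : {a : L // IsAtom a} → ℚ}
    (hg : ∀ h : L, IsCoatom h → ∑ a with a.1 ≤ h, g a = 0) (x : L) :
    (μ x ⊤ + ∑ h ∈ Icc x ⊤ with IsCoatom h, μ x h) * ∑ a, g a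
      = μ x ⊤ * ∑ a with a.1 ≤ x, g a := by
  have hzero : ∑ h ∈ Icc x ⊤ with IsCoatom h, μ x h * ∑ a with a.1 ≤ h, g a = 0 :=
    sum_eq_zero fun h hh => by rw [hg h (mem_filter.1 hh).2, mul_zero]
  have hswap : ∑ h ∈ Icc x ⊤ with IsCoatom h, μ x h * ∑ a with a.1 ≤ h, g a
      = ∑ a, g a * ∑ h ∈ Icc x ⊤ with IsCoatom h ∧ a.1 ≤ h, μ x h := by
    simp_rw [mul_sum, ← filter_filter, sum_filter (s := filter IsCoatom _), sum_filter (s := univ)]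
    rw [sum_comm]
    refine sum_congr rfl fun a _ => sum_congr rfl fun h _ => ?_
    split_ifs <;> ring
  rw [hswap] at hzero
  simp only [sum_mu_isCoatom_and_le (Subtype.prop _), mul_sub, sum_sub_distrib, ← sum_mul,
    mul_ite, mul_zero, ← sum_filter] at hzero
  linarith

end Coatoms

end IncidenceAlgebra

section Incidence

open IncidenceAlgebra
open scoped Classical

variable {L : Type*} [Lattice L] [BoundedOrder L] [Fintype L] [LocallyFiniteOrder L]
  [IsUpperModularLattice L] [IsAtomistic L]

local notation "μ" => mu ℚ

theorem linearIndependent_isAtom_le_isCoatom {r : L → ℕ}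
    (hr0 : r ⊥ = 0) (hr : ∀ x y : L, x ⋖ y → r y = r x + 1) (hrank : 2 ≤ r ⊤) :
    LinearIndependent ℚ fun (a : {a : L // IsAtom a}) (h : {h : L // IsCoatom h}) =>
      if a.1 ≤ h.1 then (1 : ℚ) else 0 := by
  refine Fintype.linearIndependent_iff.2 fun g hg b => ?_
  replace hg : ∀ h : L, IsCoatom h → ∑ a with a.1 ≤ h, g a = 0 := fun h hh => by
    simpa [sum_filter] using congr_fun hg ⟨h, hh⟩
  have hcoeff : μ (⊥ : L) ⊤ + ∑ h ∈ Icc (⊥ : L) ⊤ with IsCoatom h, μ ⊥ h ≠ 0 := by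
    have hb := sum_mu_isCoatom_and_le (x := ⊥) b.2
    rw [if_neg (b.2.1 ∘ le_bot_iff.1), sub_zero] at hb
    obtain ⟨h, hh, hbh⟩ := exists_isCoatom_le_of_isAtom hr0 hr hrank b.2
    refine hb ▸ sum_mu_ne_zero_of_isCoatom hr ⟨h, ?_⟩ fun h hh => ⟨bot_le, (mem_filter.1 hh).2.1⟩
    exact mem_filter.2 ⟨mem_Icc.2 ⟨bot_le, le_top⟩, hh, hbh⟩
  have htotal : ∑ a, g a = 0 := by
    have h0 := mu_top_add_sum_isCoatom_mul_sum hg ⊥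
    rw [filter_false_of_mem fun a _ => a.2.1 ∘ le_bot_iff.1, sum_empty, mul_zero] at h0
    exact (mul_eq_zero.1 h0).resolve_left hcoeff
  have hb := mu_top_add_sum_isCoatom_mul_sum hg b
  rw [htotal, mul_zero, sum_filter, Fintype.sum_eq_single b fun a hab => if_neg fun hle =>
    hab (Subtype.ext ((b.2.le_iff_eq a.2.1).1 hle)), if_pos le_rfl] at hb
  exact (mul_eq_zero.1 hb.symm).resolve_left (mu_ne_zero hr le_top)

end Incidence

/-- Every finite geometric lattice of rank at least 2 has a matching. -/
theorem finite_geometric_lattice_matching (L : Type u) [CompleteLattice L] [Finite L]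
    (hL : IsGeomLatFH L) (r : L → ℕ) (hr : IsRankFn r) (hrank : 2 ≤ r ⊤) :
    HasMatching L := by
  classical
  have := Fintype.ofFinite L
  have := Fintype.toLocallyFiniteOrder (α := L)
  have := hL.isUpperModularLattice
  have := hL.isAtomistic
  exact exists_injective_of_linearIndependent _
    (linearIndependent_isAtom_le_isCoatom hr.1 hr.2 hrank)
end

section
/- Every geometric lattice of rank 3 has a matching. -/
universe u

/-!
Atoms and coatoms of a geometric lattice of rank 3 are the points and lines of a linear space:
two points lie on exactly one line, every line is spanned by two points, and no line contains
every point. Moreover a point `q` off a line `ℓ` lies on at least as many lines as `ℓ` has points,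
via `x ↦ q ⊔ x`.

With finitely many points, Hall's theorem applies once every finite set `S` of points lies on at
least `|S|` lines. A point of `S` with a line meeting `S` only in it can be removed; otherwise every
line through `S` meets it twice, and the de Bruijn–Erdős double count gives the bound.

With `κ` points, `κ` infinite, suppose two points `p`, `q` lie on fewer than `κ` lines. Then the
line `m = p ⊔ q` carries `κ` points, so every point off `m` lies on `κ` lines. Fix `b₀` off `m` and
match `x ↦ x ⊔ b₀` on `m`, except `p ↦ m` and `b₀ ↦ b₀ ⊔ p`. Otherwise at most one point `p` lies
on fewer than `κ` lines, and we match it to any line through it. In both cases every remaining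
point lies on `κ` lines, of which only finitely many are used, and a transfinite greedy choice
completes the matching.
-/

open Function Set

theorem wellFoundedLT_of_forall_isChain_finite {α : Type*} [PartialOrder α]
    (h : ∀ c : Set α, IsChain (· ≤ ·) c → c.Finite) : WellFoundedLT α :=
  ⟨wellFounded_iff_isEmpty_descending_chain.2 ⟨fun ⟨f, hf⟩ =>
    have hf : StrictAnti f := strictAnti_nat_of_succ_lt hf
    infinite_range_of_injective hf.injective (h _ hf.antitone.isChain_range)⟩⟩

theorem wellFoundedGT_of_forall_isChain_finite {α : Type*} [PartialOrder α]
    (h : ∀ c : Set α, IsChain (· ≤ ·) c → c.Finite) : WellFoundedGT α :=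
  ⟨wellFounded_iff_isEmpty_descending_chain.2 ⟨fun ⟨f, hf⟩ =>
    have hf : StrictMono f := strictMono_nat_of_lt_succ hf
    infinite_range_of_injective hf.injective (h _ hf.monotone.isChain_range)⟩⟩

theorem strictMono_of_covBy_imp_eq_add_one {α : Type*} [PartialOrder α] [WellFoundedLT α]
    [WellFoundedGT α] {r : α → ℕ} (hr : ∀ x y, x ⋖ y → r y = r x + 1) : StrictMono r := by
  intro x y hxy
  induction x using WellFoundedGT.induction with
  | _ x ih =>
    obtain ⟨z, hxz, hzy⟩ := exists_covBy_le_of_lt hxy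
    rcases hzy.eq_or_lt with rfl | hzy
    · rw [hr x z hxz]; omega
    · have := ih z hxz.lt hzy; rw [hr x z hxz] at this; omega

section Greedy
open Cardinal

/-- Greedy choice along an embedding of `ι` into the initial ordinal of `κ`: fewer than `κ` values
are taken before any index. -/
theorem exists_injective_mem_of_mk_le {ι β : Type u} {κ : Cardinal.{u}} (hι : #ι ≤ κ)
    {C : ι → Set β} (hC : ∀ i, κ ≤ #(C i)) : ∃ f : ι → β, Injective f ∧ ∀ i, f i ∈ C i := by
  obtain ⟨e⟩ : Nonempty (ι ↪ κ.ord.ToType) := by rwa [← le_def, mk_toType, card_ord]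
  have hfresh : ∀ i (prev : {j // e j < e i} → β), ∃ b ∈ C i, b ∉ range prev := by
    intro i prev
    by_contra! h
    have hprev : #(range prev) < κ := calc
      #(range prev) ≤ #{j // e j < e i} := mk_range_le
      _ ≤ #(Iio (e i)) := mk_le_of_injective (f := fun j => ⟨e j, j.2⟩)
        fun j k hjk => Subtype.ext (e.injective (congrArg Subtype.val hjk))
      _ < κ := by simpa using mk_Iio_lt (e i) (by simp)
    exact (hprev.trans_le (hC i)).not_ge (mk_le_mk_of_subset h)
  have hwf : WellFounded (InvImage (· < ·) e) := InvImage.wf e wellFounded_lt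
  set f : ι → β := hwf.fix fun i prev => (hfresh i fun j => prev j j.2).choose
  have hf : ∀ i, f i ∈ C i ∧ ∀ j, e j < e i → f j ≠ f i := by
    intro i
    rw [show f i = _ from hwf.fix_eq _ i]
    obtain ⟨hmem, hnew⟩ := (hfresh i _).choose_spec
    exact ⟨hmem, fun j hj h => hnew ⟨⟨j, hj⟩, h⟩⟩
  refine ⟨f, fun i j hij => ?_, fun i => (hf i).1⟩
  rcases lt_trichotomy (e i) (e j) with h | h | h
  · exact absurd hij ((hf j).2 i h)
  · exact e.injective h
  · exact absurd hij.symm ((hf i).2 j h)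

end Greedy

theorem isAtomP_iff_isAtom {P : Type*} [PartialOrder P] [OrderBot P] {a : P} :
    IsAtomP a ↔ IsAtom a := by
  refine ⟨fun ⟨z, hz, hza⟩ => ?_, fun ha => ⟨⊥, fun _ => bot_le, ha.bot_covBy⟩⟩
  rwa [le_antisymm (hz ⊥) bot_le, bot_covBy_iff] at hza

/-- Atoms and coatoms of `L`, as points and lines, form a linear space that is not a single line. -/
structure IsPlane (L : Type*) [Lattice L] [BoundedOrder L] : Prop where
  isCoatom_sup {a b : L} : IsAtom a → IsAtom b → a ≠ b → IsCoatom (a ⊔ b)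
  exists_isCoatom_ge {a : L} : IsAtom a → ∃ ℓ, IsCoatom ℓ ∧ a ≤ ℓ
  exists_isAtom_not_le {ℓ : L} : IsCoatom ℓ → ∃ a, IsAtom a ∧ ¬ a ≤ ℓ
  exists_eq_sup {ℓ : L} : IsCoatom ℓ → ∃ a b, IsAtom a ∧ IsAtom b ∧ ℓ = a ⊔ b

theorem IsGeomLatFH.wellFoundedLT {P : Type*} [PartialOrder P] (hL : IsGeomLatFH P) :
    WellFoundedLT P :=
  wellFoundedLT_of_forall_isChain_finite hL.2.2.1

section RankFn

variable {L : Type*} [PartialOrder L] [BoundedOrder L] {r : L → ℕ}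

theorem IsRankFn.rank_eq_one (hr : IsRankFn r) {a : L} (ha : IsAtom a) : r a = 1 := by
  rw [hr.2 ⊥ a ha.bot_covBy, hr.1]

theorem IsRankFn.rank_add_one_eq (hr : IsRankFn r) {ℓ : L} (hℓ : IsCoatom ℓ) : r ℓ + 1 = r ⊤ :=
  (hr.2 ℓ ⊤ hℓ.covBy_top).symm

theorem isCoatom_of_rank_add_one_eq (hmono : StrictMono r) {x : L} (hx : r x + 1 = r ⊤) :
    IsCoatom x := by
  refine ⟨fun h => by rw [h] at hx; omega, fun y hxy => by_contra fun hy => ?_⟩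
  have := hmono hxy
  have := hmono (lt_top_iff_ne_top.2 hy)
  omega

theorem IsGeomLatFH.strictMono (hL : IsGeomLatFH L) (hr : IsRankFn r) : StrictMono r :=
  have := hL.wellFoundedLT
  have := wellFoundedGT_of_forall_isChain_finite hL.2.2.1
  strictMono_of_covBy_imp_eq_add_one hr.2

end RankFn

section RankThree

variable {L : Type*} [Lattice L] [BoundedOrder L] {r : L → ℕ} (hL : IsGeomLatFH L)
  (hr : IsRankFn r) (hrank : r ⊤ = 3)
include hL hr hrank

theorem IsGeomLatFH.isCoatom_of_covBy {a d : L} (ha : IsAtom a) (had : a ⋖ d) : IsCoatom d :=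
  isCoatom_of_rank_add_one_eq (hL.strictMono hr) (by rw [hr.2 a d had, hr.rank_eq_one ha, hrank])

theorem IsGeomLatFH.isCoatom_sup {a b : L} (ha : IsAtom a) (hb : IsAtom b) (hab : a ≠ b) :
    IsCoatom (a ⊔ b) := by
  obtain ⟨d, had, hbd⟩ := hL.2.2.2.1 ⊥ a b ha.bot_covBy hb.bot_covBy hab
  have hd : a ⊔ b = d := (had.eq_or_eq le_sup_left (sup_le had.le hbd.le)).resolve_left
    fun h => hab ((ha.le_iff_eq hb.ne_bot).1 (le_sup_right.trans h.le)).symm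
  exact hd ▸ hL.isCoatom_of_covBy hr hrank ha had

theorem IsGeomLatFH.exists_eq_sup {ℓ : L} (hℓ : IsCoatom ℓ) :
    ∃ a b, IsAtom a ∧ IsAtom b ∧ ℓ = a ⊔ b := by
  obtain ⟨S, hS, hSlub⟩ := hL.2.2.2.2 ℓ
  have hS (a) (ha : a ∈ S) : IsAtom a := isAtomP_iff_isAtom.1 (hS a ha)
  obtain ⟨a, ha, b, hb, hab⟩ : ∃ a ∈ S, ∃ b ∈ S, a ≠ b := by
    by_contra! h
    obtain ⟨c, hℓc, hc⟩ : ∃ c, ℓ ≤ c ∧ r c ≤ 1 := by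
      rcases S.eq_empty_or_nonempty with rfl | ⟨a, ha⟩
      · exact ⟨⊥, hSlub.2 (by simp), by rw [hr.1]; omega⟩
      · exact ⟨a, hSlub.2 fun b hb => (h b hb a ha).le, (hr.rank_eq_one (hS a ha)).le⟩
    have := (hL.strictMono hr).monotone hℓc
    have := hr.rank_add_one_eq hℓ
    omega
  refine ⟨a, b, hS a ha, hS b hb, ?_⟩
  exact ((hL.isCoatom_sup hr hrank (hS a ha) (hS b hb) hab).le_iff.1
    (sup_le (hSlub.1 ha) (hSlub.1 hb))).resolve_left hℓ.1

theorem IsGeomLatFH.isPlane : IsPlane L := by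
  refine ⟨hL.isCoatom_sup hr hrank, fun {a} ha => ?_, fun {ℓ} hℓ => ?_, hL.exists_eq_sup hr hrank⟩
  · have := hL.wellFoundedLT
    have hatop : a ≠ ⊤ := fun h => by have := hr.rank_eq_one ha; rw [h] at this; omega
    obtain ⟨ℓ, haℓ, -⟩ := exists_covBy_le_of_lt (lt_top_iff_ne_top.2 hatop)
    exact ⟨ℓ, hL.isCoatom_of_covBy hr hrank ha haℓ, haℓ.le⟩
  · obtain ⟨S, hS, hSlub⟩ := hL.2.2.2.2 ⊤
    by_contra! h
    exact hℓ.1 (top_le_iff.1 (hSlub.2 fun a ha => h a (isAtomP_iff_isAtom.1 (hS a ha))))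

end RankThree

section Plane

variable {L : Type*} [Lattice L] [BoundedOrder L]

def coatomsAbove (x : L) : Set L := {ℓ | IsCoatom ℓ ∧ x ≤ ℓ}

def atomsBelow (x : L) : Set L := {a | IsAtom a ∧ a ≤ x}

namespace IsPlane

variable (hP : IsPlane L)
include hP

theorem eq_sup_of_le {a b ℓ : L} (ha : IsAtom a) (hb : IsAtom b) (hab : a ≠ b) (hℓ : IsCoatom ℓ)
    (haℓ : a ≤ ℓ) (hbℓ : b ≤ ℓ) : ℓ = a ⊔ b :=
  ((hP.isCoatom_sup ha hb hab).le_iff.1 (sup_le haℓ hbℓ)).resolve_left hℓ.1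

theorem exists_isCoatom_ge_ne {a ℓ : L} (ha : IsAtom a) (hℓ : IsCoatom ℓ) :
    ∃ ℓ', IsCoatom ℓ' ∧ a ≤ ℓ' ∧ ℓ' ≠ ℓ := by
  by_cases haℓ : a ≤ ℓ
  · obtain ⟨b, hb, hbℓ⟩ := hP.exists_isAtom_not_le hℓ
    refine ⟨a ⊔ b, hP.isCoatom_sup ha hb ?_, le_sup_left, ?_⟩
    · rintro rfl; exact hbℓ haℓ
    · rintro h; exact hbℓ (h ▸ le_sup_right)
  · obtain ⟨ℓ', hℓ', haℓ'⟩ := hP.exists_isCoatom_ge ha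
    exact ⟨ℓ', hℓ', haℓ', by rintro rfl; exact haℓ haℓ'⟩

theorem sup_left_injOn {q ℓ : L} (hq : IsAtom q) (hℓ : IsCoatom ℓ) (hqℓ : ¬ q ≤ ℓ) :
    InjOn (q ⊔ ·) (atomsBelow ℓ) := by
  rintro x ⟨hx, hxℓ⟩ y ⟨hy, hyℓ⟩ hxy
  by_contra hne
  have hqx : q ≠ x := by rintro rfl; exact hqℓ hxℓ
  have hline : q ⊔ x = x ⊔ y :=
    hP.eq_sup_of_le hx hy hne (hP.isCoatom_sup hq hx hqx) le_sup_right
      (le_sup_right.trans_eq (show q ⊔ y = q ⊔ x from hxy.symm))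
  exact hqℓ (hP.eq_sup_of_le hx hy hne hℓ hxℓ hyℓ ▸ hline ▸ le_sup_left)

theorem finite_setOf_isCoatom (hfin : {a : L | IsAtom a}.Finite) : {ℓ : L | IsCoatom ℓ}.Finite :=
  ((hfin.prod hfin).image fun p => p.1 ⊔ p.2).subset fun _ hℓ =>
    let ⟨a, b, ha, hb, h⟩ := hP.exists_eq_sup hℓ
    ⟨(a, b), ⟨ha, hb⟩, h.symm⟩

end IsPlane

end Plane

section Counting

open Finset

variable {α β : Type*}

theorem sum_sum_one_div_card_mul_card (s : Finset α) (t : α → Finset β) (hs : s.Nonempty)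
    (ht : ∀ a ∈ s, (t a).Nonempty) : ∑ a ∈ s, ∑ _x ∈ t a, (1 : ℚ) / (#s * #(t a)) = 1 := by
  have hs0 : (#s : ℚ) ≠ 0 := by exact_mod_cast hs.card_pos.ne'
  calc ∑ a ∈ s, ∑ _x ∈ t a, (1 : ℚ) / (#s * #(t a))
      = ∑ _a ∈ s, (1 : ℚ) / #s := sum_congr rfl fun a ha => by
        have : (#(t a) : ℚ) ≠ 0 := by exact_mod_cast (ht a ha).card_pos.ne'
        rw [sum_const, nsmul_eq_mul]; field_simp
    _ = 1 := by rw [sum_const, nsmul_eq_mul]; field_simp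

/-- de Bruijn–Erdős double count over the non-incident pairs `(a, ℓ)`: the weights
`1 / (#s * (#N - deg a))` and `1 / (#N * (#s - size ℓ))` both total `1`, but if `#N < #s` the
second is smaller on every pair (`deg a` and `size ℓ` count the incidences of `a` and `ℓ`). -/
theorem card_le_card_of_nonincident_card_le (s : Finset α) (N : Finset β) (I : α → β → Prop)
    [DecidableRel I] (hdeg_pos : ∀ a ∈ s, 0 < #{ℓ ∈ N | I a ℓ})
    (hdeg_lt : ∀ a ∈ s, #{ℓ ∈ N | I a ℓ} < #N) (hsize_lt : ∀ ℓ ∈ N, #{a ∈ s | I a ℓ} < #s)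
    (hsize_le : ∀ a ∈ s, ∀ ℓ ∈ N, ¬ I a ℓ → #{b ∈ s | I b ℓ} ≤ #{ℓ' ∈ N | I a ℓ'}) :
    #s ≤ #N := by
  by_contra! hNs
  set t : α → Finset β := fun a => {ℓ ∈ N | ¬ I a ℓ}
  set t' : β → Finset α := fun ℓ => {a ∈ s | ¬ I a ℓ}
  have ht (a) : #(t a) = #N - #{ℓ ∈ N | I a ℓ} :=
    Nat.eq_sub_of_add_eq' (card_filter_add_card_filter_not (s := N) (I a))
  have ht' (ℓ) : #(t' ℓ) = #s - #{a ∈ s | I a ℓ} :=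
    Nat.eq_sub_of_add_eq' (card_filter_add_card_filter_not (s := s) (I · ℓ))
  have hs : s.Nonempty := card_pos.1 (by omega)
  have hN : N.Nonempty := by
    obtain ⟨a, ha⟩ := hs
    exact card_pos.1 ((hdeg_pos a ha).trans (hdeg_lt a ha))
  have hne (a) (ha : a ∈ s) : (t a).Nonempty := card_pos.1 (by rw [ht]; have := hdeg_lt a ha; omega)
  have hne' (ℓ) (hℓ : ℓ ∈ N) : (t' ℓ).Nonempty :=
    card_pos.1 (by rw [ht']; have := hsize_lt ℓ hℓ; omega)
  have key : ∑ a ∈ s, ∑ ℓ ∈ t a, (1 : ℚ) / (#N * #(t' ℓ)) <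
      ∑ a ∈ s, ∑ _ℓ ∈ t a, (1 : ℚ) / (#s * #(t a)) := by
    refine sum_lt_sum_of_nonempty hs fun a ha => sum_lt_sum_of_nonempty (hne a ha) fun ℓ hℓ => ?_
    obtain ⟨hℓN, haℓ⟩ := mem_filter.1 hℓ
    have hle : (#{b ∈ s | I b ℓ} : ℚ) ≤ #{ℓ' ∈ N | I a ℓ'} := by
      exact_mod_cast hsize_le a ha ℓ hℓN haℓ
    have hpos : (0 : ℚ) < #{ℓ' ∈ N | I a ℓ'} := by exact_mod_cast hdeg_pos a ha
    have hNs : (#N : ℚ) < #s := by exact_mod_cast hNs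
    rw [one_div_lt_one_div (mul_pos (by exact_mod_cast hN.card_pos)
      (by exact_mod_cast (hne' ℓ hℓN).card_pos)) (mul_pos (by exact_mod_cast hs.card_pos)
      (by exact_mod_cast (hne a ha).card_pos)), ht, ht', Nat.cast_sub (hdeg_lt a ha).le,
      Nat.cast_sub (hsize_lt ℓ hℓN).le]
    nlinarith
  rw [sum_sum_one_div_card_mul_card s t hs hne, sum_comm' (t' := N) (s' := t') (by
      intro a ℓ; simp only [t, t', mem_filter]; tauto),
    sum_sum_one_div_card_mul_card N t' hN hne'] at key
  exact lt_irrefl _ key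

end Counting

namespace IsPlane

open Finset

variable {L : Type*} [Lattice L] [BoundedOrder L] [DecidableEq L] (hP : IsPlane L)
  {t : L → Finset L} (ht : ∀ a, ↑(t a) = coatomsAbove a)
include hP ht

theorem card_le_card_biUnion_of_forall_exists_ne (s : Finset L) (hs : ∀ a ∈ s, IsAtom a)
    (hsec : ∀ a ∈ s, ∀ ℓ ∈ t a, ∃ b ∈ s, ℓ ∈ t b ∧ b ≠ a) : #s ≤ #(s.biUnion t) := by
  classical
  have hmem {a ℓ : L} : ℓ ∈ t a ↔ IsCoatom ℓ ∧ a ≤ ℓ := by rw [← mem_coe, ht]; rfl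
  have hN {a ℓ : L} (ha : a ∈ s) (haℓ : ℓ ∈ t a) : ℓ ∈ s.biUnion t := mem_biUnion.2 ⟨a, ha, haℓ⟩
  refine card_le_card_of_nonincident_card_le s (s.biUnion t) (· ≤ ·) (fun a ha => ?_)
    (fun a ha => ?_) (fun ℓ hℓ => ?_) (fun a ha ℓ hℓ haℓ => ?_)
  · obtain ⟨ℓ, hℓ, haℓ⟩ := hP.exists_isCoatom_ge (hs a ha)
    exact card_pos.2 ⟨ℓ, mem_filter.2 ⟨hN ha (hmem.2 ⟨hℓ, haℓ⟩), haℓ⟩⟩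
  · refine card_lt_card (filter_ssubset.2 ?_)
    obtain ⟨ℓ, hℓ, haℓ⟩ := hP.exists_isCoatom_ge (hs a ha)
    obtain ⟨b, hb, hbℓ, hba⟩ := hsec a ha ℓ (hmem.2 ⟨hℓ, haℓ⟩)
    have hab := hP.isCoatom_sup (hs a ha) (hs b hb) hba.symm
    obtain ⟨ℓ', hℓ', hbℓ', hne⟩ := hP.exists_isCoatom_ge_ne (hs b hb) hab
    exact ⟨ℓ', hN hb (hmem.2 ⟨hℓ', hbℓ'⟩), fun haℓ' =>
      hne (hP.eq_sup_of_le (hs a ha) (hs b hb) hba.symm hℓ' haℓ' hbℓ')⟩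
  · refine card_lt_card (filter_ssubset.2 ?_)
    obtain ⟨a, ha, haℓ⟩ := mem_biUnion.1 hℓ
    obtain ⟨hℓ, haℓ⟩ := hmem.1 haℓ
    obtain ⟨ℓ', hℓ', haℓ', hne⟩ := hP.exists_isCoatom_ge_ne (hs a ha) hℓ
    obtain ⟨b, hb, hbℓ', hba⟩ := hsec a ha ℓ' (hmem.2 ⟨hℓ', haℓ'⟩)
    refine ⟨b, hb, fun hbℓ => hne ?_⟩
    rw [hP.eq_sup_of_le (hs a ha) (hs b hb) hba.symm hℓ haℓ hbℓ]
    exact hP.eq_sup_of_le (hs a ha) (hs b hb) hba.symm hℓ' haℓ' (hmem.1 hbℓ').2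
  · obtain ⟨_, _, ha'ℓ⟩ := mem_biUnion.1 hℓ
    have hℓ := (hmem.1 ha'ℓ).1
    refine card_le_card_of_injOn (a ⊔ ·) (fun b hb => ?_) fun b hb b' hb' => ?_
    · obtain ⟨hb, hbℓ⟩ := mem_filter.1 hb
      have hab : a ≠ b := by rintro rfl; exact haℓ hbℓ
      exact mem_filter.2 ⟨hN ha (hmem.2 ⟨hP.isCoatom_sup (hs a ha) (hs b hb) hab, le_sup_left⟩),
        le_sup_left⟩
    · obtain ⟨hb, hbℓ⟩ := mem_filter.1 (mem_coe.1 hb)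
      obtain ⟨hb', hb'ℓ⟩ := mem_filter.1 (mem_coe.1 hb')
      exact hP.sup_left_injOn (hs a ha) hℓ haℓ ⟨hs b hb, hbℓ⟩ ⟨hs b' hb', hb'ℓ⟩

/-- A point of `s` on a line meeting `s` nowhere else can be removed. -/
theorem card_le_card_biUnion (s : Finset L) (hs : ∀ a ∈ s, IsAtom a) :
    #s ≤ #(s.biUnion t) := by
  induction s using strongInduction with
  | H s ih =>
    by_cases hpriv : ∃ a ∈ s, ∃ ℓ ∈ t a, ∀ b ∈ s, ℓ ∈ t b → b = a
    · obtain ⟨a, ha, ℓ, haℓ, hpriv⟩ := hpriv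
      have hℓ : ℓ ∉ (s.erase a).biUnion t := fun h => by
        obtain ⟨b, hb, hbℓ⟩ := mem_biUnion.1 h
        exact ne_of_mem_erase hb (hpriv b (mem_of_mem_erase hb) hbℓ)
      calc #s = #(s.erase a) + 1 := (card_erase_add_one ha).symm
        _ ≤ #((s.erase a).biUnion t) + 1 := by
          have := ih _ (erase_ssubset ha) fun b hb => hs b (mem_of_mem_erase hb)
          omega
        _ = #(insert ℓ ((s.erase a).biUnion t)) := (card_insert_of_notMem hℓ).symm
        _ ≤ #(s.biUnion t) := card_le_card (insert_subset (mem_biUnion.2 ⟨a, ha, haℓ⟩)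
          (biUnion_subset_biUnion_of_subset_left _ (erase_subset a s)))
    · push Not at hpriv
      exact hP.card_le_card_biUnion_of_forall_exists_ne ht s hs hpriv

end IsPlane

theorem IsPlane.hasMatching_of_finite {L : Type*} [CompleteLattice L] (hP : IsPlane L)
    (hfin : {a : L | IsAtom a}.Finite) : HasMatching L := by
  classical
  have hlines (a : L) : (coatomsAbove a).Finite :=
    (hP.finite_setOf_isCoatom hfin).subset fun _ h => h.1
  have ht (a : L) : ↑(hlines a).toFinset = coatomsAbove a := Set.Finite.coe_toFinset _
  obtain ⟨f, hf_inj, hf⟩ := (Finset.all_card_le_biUnion_card_iff_exists_injective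
    fun a : {a : L // IsAtom a} => (hlines a).toFinset).1 fun A => by
      have := hP.card_le_card_biUnion ht (A.map (Function.Embedding.subtype _))
        (by simp only [Finset.mem_map]; rintro _ ⟨a, -, rfl⟩; exact a.2)
      rw [Finset.card_map] at this
      convert this using 2
      ext; simp
  have hf (a : {a : L // IsAtom a}) : f a ∈ coatomsAbove (a : L) := by rw [← ht]; exact hf a
  exact ⟨fun a => ⟨f a, (hf a).1⟩, fun a b h => hf_inj (congrArg Subtype.val h), fun a => (hf a).2⟩

section Matching

open Cardinal

variable {L : Type u} [CompleteLattice L]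

def IsMatchingOn (f : L → L) (s : Set L) : Prop :=
  InjOn f s ∧ ∀ a ∈ s, f a ∈ coatomsAbove a

theorem IsMatchingOn.hasMatching {f : L → L} (hf : IsMatchingOn f {a | IsAtom a}) :
    HasMatching L :=
  ⟨fun a => ⟨f a, (hf.2 a a.2).1⟩, fun a b h => Subtype.ext (hf.1 a.2 b.2 (congrArg Subtype.val h)),
    fun a => (hf.2 a a.2).2⟩

theorem IsMatchingOn.update_insert [DecidableEq L] {f : L → L} {s : Set L} {a ℓ : L}
    (hf : IsMatchingOn f s) (ha : a ∉ s) (hℓ : ℓ ∈ coatomsAbove a) (hℓs : ℓ ∉ f '' s) :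
    IsMatchingOn (Function.update f a ℓ) (insert a s) ∧
      Function.update f a ℓ '' insert a s = insert ℓ (f '' s) := by
  have heq : EqOn (Function.update f a ℓ) f s := fun x hx =>
    update_of_ne (ne_of_mem_of_not_mem hx ha) _ _
  refine ⟨⟨(injOn_insert ha).2 ⟨hf.1.congr heq.symm, ?_⟩, ?_⟩, ?_⟩
  · rwa [update_self, heq.image_eq]
  · rintro x (rfl | hx)
    · rwa [update_self]
    · rw [heq hx]; exact hf.2 x hx
  · rw [image_insert_eq, update_self, heq.image_eq]

theorem le_mk_sdiff_of_mk_inter_lt {α : Type u} {κ : Cardinal.{u}} (hκ : ℵ₀ ≤ κ) {A B : Set α}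
    (hA : κ ≤ #A) (hAB : #(A ∩ B : Set α) < κ) : κ ≤ #(A \ B : Set α) := by
  by_contra! h
  have := le_mk_sdiff_add_mk A (A ∩ B)
  rw [sdiff_self_inter] at this
  exact (hA.trans this).not_gt (add_lt_of_lt hκ h hAB)

theorem IsMatchingOn.hasMatching_of_finite_inter {f : L → L} {s : Set L} (hf : IsMatchingOn f s)
    (hs : s ⊆ {a | IsAtom a}) (hinf : {a : L | IsAtom a}.Infinite)
    (hrich : ∀ b, IsAtom b → b ∉ s → #{a : L | IsAtom a} ≤ #(coatomsAbove b))
    (hfree : ∀ b, IsAtom b → b ∉ s → (coatomsAbove b ∩ f '' s).Finite) : HasMatching L := by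
  classical
  have hκ : ℵ₀ ≤ #{a : L | IsAtom a} := aleph0_le_mk_iff.2 hinf.to_subtype
  set t := {a : L | IsAtom a} \ s
  obtain ⟨g, hg_inj, hg⟩ := exists_injective_mem_of_mk_le (mk_le_mk_of_subset sdiff_subset)
    (C := fun b : t => coatomsAbove (b : L) \ f '' s) fun b =>
      le_mk_sdiff_of_mk_inter_lt hκ (hrich b b.2.1 b.2.2)
        (((hfree b b.2.1 b.2.2).lt_aleph0).trans_le hκ)
  let F : L → L := fun x => if h : x ∈ t then g ⟨x, h⟩ else f x
  have hFs : ∀ x ∈ s, F x = f x := fun x hx => dif_neg fun h => h.2 hx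
  have hFt : ∀ x (h : x ∈ t), F x = g ⟨x, h⟩ := fun x h => dif_pos h
  refine IsMatchingOn.hasMatching (f := F) ?_
  rw [← union_sdiff_cancel hs]
  refine ⟨(injOn_union disjoint_sdiff_right).2 ⟨fun x hx y hy hxy => ?_, fun x hx y hy hxy => ?_,
    fun x hx y hy hxy => ?_⟩, ?_⟩
  · rw [hFs x hx, hFs y hy] at hxy; exact hf.1 hx hy hxy
  · rw [hFt x hx, hFt y hy] at hxy; exact congrArg Subtype.val (hg_inj hxy)
  · rw [hFs x hx, hFt y hy] at hxy; exact (hg ⟨y, hy⟩).2 ⟨x, hx, hxy⟩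
  · rintro x (hx | hx)
    · rw [hFs x hx]; exact hf.2 x hx
    · rw [hFt x hx]; exact (hg ⟨x, hx⟩).1

end Matching

namespace IsPlane

open Cardinal

variable {L : Type u} [CompleteLattice L] (hP : IsPlane L)
include hP

theorem mk_atomsBelow_le_mk_coatomsAbove {q ℓ : L} (hq : IsAtom q) (hℓ : IsCoatom ℓ)
    (hqℓ : ¬ q ≤ ℓ) : #(atomsBelow ℓ) ≤ #(coatomsAbove q) := by
  rw [← mk_image_eq_of_injOn _ _ (hP.sup_left_injOn hq hℓ hqℓ)]
  refine mk_le_mk_of_subset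
    (image_subset_iff.2 fun x hx => ⟨hP.isCoatom_sup hq hx.1 ?_, le_sup_left⟩)
  rintro rfl; exact hqℓ hx.2

/-- Every point lies on a line through `p`; those other than `p ⊔ q` carry at most as many points
as there are lines through `q`. -/
theorem le_mk_atomsBelow_sup {p q : L} (hinf : {a : L | IsAtom a}.Infinite) (hp : IsAtom p)
    (hq : IsAtom q) (hpq : p ≠ q) (hp' : #(coatomsAbove p) < #{a : L | IsAtom a})
    (hq' : #(coatomsAbove q) < #{a : L | IsAtom a}) :
    #{a : L | IsAtom a} ≤ #(atomsBelow (p ⊔ q)) := by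
  by_contra! hpq'
  have hcover : {a : L | IsAtom a} ⊆ ⋃ ℓ ∈ coatomsAbove p, atomsBelow ℓ := by
    intro x hx
    by_cases hxp : x = p
    · obtain ⟨ℓ, hℓ, hpℓ⟩ := hP.exists_isCoatom_ge hp
      exact mem_biUnion ⟨hℓ, hpℓ⟩ ⟨hx, hxp ▸ hpℓ⟩
    · exact mem_biUnion ⟨hP.isCoatom_sup hp hx (Ne.symm hxp), le_sup_left⟩ ⟨hx, le_sup_right⟩
  have hbound : ∀ ℓ ∈ coatomsAbove p,
      #(atomsBelow ℓ) ≤ max #(atomsBelow (p ⊔ q)) #(coatomsAbove q) := by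
    rintro ℓ ⟨hℓ, hpℓ⟩
    by_cases hqℓ : q ≤ ℓ
    · rw [hP.eq_sup_of_le hp hq hpq hℓ hpℓ hqℓ]; exact le_max_left _ _
    · exact (hP.mk_atomsBelow_le_mk_coatomsAbove hq hℓ hqℓ).trans (le_max_right _ _)
  have := calc #{a : L | IsAtom a}
      ≤ #(⋃ ℓ ∈ coatomsAbove p, atomsBelow ℓ) := mk_le_mk_of_subset hcover
    _ ≤ #(coatomsAbove p) * ⨆ ℓ : coatomsAbove p, #(atomsBelow (ℓ : L)) := mk_biUnion_le _ _
    _ ≤ #(coatomsAbove p) * max #(atomsBelow (p ⊔ q)) #(coatomsAbove q) := by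
      gcongr; exact ciSup_le' fun ℓ => hbound ℓ ℓ.2
    _ < #{a : L | IsAtom a} :=
      mul_lt_of_lt (aleph0_le_mk_iff.2 hinf.to_subtype) hp' (max_lt hpq' hq')
  exact this.false

/-- Points `x` of `m` go to `x ⊔ b₀`, except one point `p` of `m`, which goes to `m`, while `b₀`
goes to `b₀ ⊔ p`. -/
theorem exists_isMatchingOn_insert_atomsBelow {m b₀ : L} (hm : IsCoatom m)
    (hb₀ : IsAtom b₀) (hb₀m : ¬ b₀ ≤ m) : ∃ f : L → L, IsMatchingOn f (insert b₀ (atomsBelow m)) ∧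
      f '' insert b₀ (atomsBelow m) ⊆ insert m (coatomsAbove b₀) := by
  classical
  obtain ⟨p, _, hp, -, hm_eq⟩ := hP.exists_eq_sup hm
  have hpm : p ≤ m := hm_eq ▸ le_sup_left
  have hb₀p : b₀ ≠ p := by rintro rfl; exact hb₀m hpm
  set s₀ := atomsBelow m \ {p}
  have hbase : IsMatchingOn (· ⊔ b₀) s₀ := by
    refine ⟨fun x hx y hy hxy => hP.sup_left_injOn hb₀ hm hb₀m hx.1 hy.1 ?_, fun x hx => ?_⟩
    · simpa only [sup_comm] using hxy
    · refine ⟨hP.isCoatom_sup hx.1.1 hb₀ ?_, le_sup_left⟩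
      rintro rfl; exact hb₀m hx.1.2
  obtain ⟨h₁, himage₁⟩ := hbase.update_insert (fun h => h.2 rfl) ⟨hm, hpm⟩ <| by
    rintro ⟨x, -, hx⟩; exact hb₀m (hx ▸ le_sup_right)
  have hb₀p_free : b₀ ⊔ p ∉ insert m ((· ⊔ b₀) '' s₀) := by
    rintro (h | ⟨x, ⟨⟨hx, hxm⟩, hxp⟩, hxl⟩)
    · exact hb₀m (h ▸ le_sup_left)
    · have hxl : x ⊔ b₀ = b₀ ⊔ p := hxl
      have hxb₀ : x ⊔ b₀ = m := by
        rw [hP.eq_sup_of_le hx hp hxp (hxl ▸ hP.isCoatom_sup hb₀ hp hb₀p) le_sup_left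
          (hxl ▸ le_sup_right), ← hP.eq_sup_of_le hx hp hxp hm hxm hpm]
      exact hb₀m (hxb₀ ▸ le_sup_right)
  obtain ⟨h₂, himage₂⟩ := h₁.update_insert (by rintro (h | h); exacts [hb₀p h, hb₀m h.1.2])
    ⟨hP.isCoatom_sup hb₀ hp hb₀p, le_sup_left⟩ (himage₁ ▸ hb₀p_free)
  have hs : insert b₀ (insert p s₀) = insert b₀ (atomsBelow m) := by
    rw [insert_sdiff_singleton, insert_eq_of_mem (show p ∈ atomsBelow m from ⟨hp, hpm⟩)]
  refine ⟨_, hs ▸ h₂, ?_⟩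
  rw [← hs, himage₂, himage₁]
  rintro ℓ (rfl | rfl | ⟨x, hx, rfl⟩)
  exacts [Or.inr ⟨hP.isCoatom_sup hb₀ hp hb₀p, le_sup_left⟩, Or.inl rfl,
    Or.inr ⟨(hbase.2 x hx).1, le_sup_right⟩]

theorem hasMatching_of_le_mk_atomsBelow (hinf : {a : L | IsAtom a}.Infinite) {m : L}
    (hm : IsCoatom m) (hbig : #{a : L | IsAtom a} ≤ #(atomsBelow m)) : HasMatching L := by
  obtain ⟨b₀, hb₀, hb₀m⟩ := hP.exists_isAtom_not_le hm
  obtain ⟨f, hf, himage⟩ := hP.exists_isMatchingOn_insert_atomsBelow hm hb₀ hb₀m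
  refine hf.hasMatching_of_finite_inter (insert_subset hb₀ fun _ hx => hx.1) hinf
    (fun b hb hbs => ?_) fun b hb hbs => (finite_singleton (b ⊔ b₀)).subset ?_
  · exact hbig.trans (hP.mk_atomsBelow_le_mk_coatomsAbove hb hm fun hbm => hbs (.inr ⟨hb, hbm⟩))
  · rintro ℓ ⟨⟨hℓ, hbℓ⟩, hℓf⟩
    rcases himage hℓf with rfl | ⟨-, hb₀ℓ⟩
    · exact absurd (Or.inr ⟨hb, hbℓ⟩) hbs
    · exact hP.eq_sup_of_le hb hb₀ (fun h => hbs (.inl h)) hℓ hbℓ hb₀ℓ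

theorem hasMatching_of_forall_ne_le_mk (hinf : {a : L | IsAtom a}.Infinite) {p : L}
    (hp : IsAtom p) (hrich : ∀ b, IsAtom b → b ≠ p → #{a : L | IsAtom a} ≤ #(coatomsAbove b)) :
    HasMatching L := by
  obtain ⟨ℓ, hℓ⟩ := hP.exists_isCoatom_ge hp
  refine IsMatchingOn.hasMatching_of_finite_inter (f := fun _ => ℓ) (s := {p})
    ⟨injOn_singleton _ _, by rintro _ rfl; exact hℓ⟩ (by simpa using hp) hinf
    hrich fun b _ _ => (finite_singleton ℓ).subset ?_
  simp

theorem hasMatching_of_infinite (hinf : {a : L | IsAtom a}.Infinite) : HasMatching L := by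
  by_cases hpoor : ∃ p q : L, IsAtom p ∧ IsAtom q ∧ p ≠ q ∧
      #(coatomsAbove p) < #{a : L | IsAtom a} ∧ #(coatomsAbove q) < #{a : L | IsAtom a}
  · obtain ⟨p, q, hp, hq, hpq, hp', hq'⟩ := hpoor
    exact hP.hasMatching_of_le_mk_atomsBelow hinf (hP.isCoatom_sup hp hq hpq)
      (hP.le_mk_atomsBelow_sup hinf hp hq hpq hp' hq')
  · push Not at hpoor
    obtain ⟨p, hp⟩ := hinf.nonempty
    by_cases hq : ∃ q : L, IsAtom q ∧ #(coatomsAbove q) < #{a : L | IsAtom a}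
    · obtain ⟨q, hq, hq'⟩ := hq
      exact hP.hasMatching_of_forall_ne_le_mk hinf hq fun b hb hbq => hpoor q b hq hb hbq.symm hq'
    · push Not at hq
      exact hP.hasMatching_of_forall_ne_le_mk hinf hp fun b hb _ => hq b hb

end IsPlane

/-- Every geometric lattice of rank 3 has a matching. -/
theorem rank_three_geometric_lattice_matching (L : Type u) [CompleteLattice L]
    (hL : IsGeomLatFH L) (r : L → ℕ) (hr : IsRankFn r) (hrank : r ⊤ = 3) :
    HasMatching L := by
  have hP := hL.isPlane hr hrank
  by_cases hfin : {a : L | IsAtom a}.Finite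
  · exact hP.hasMatching_of_finite hfin
  · exact hP.hasMatching_of_infinite hfin
end

section
/- Let L be an infinite geometric lattice of finite height. Then the cardinality of the set of atoms of L, the cardinality of the set of hyperplanes of L, and the cardinality of L are all equal. -/
universe u

section Aux

open Classical

variable {L : Type u} [CompleteLattice L]

lemma isAtomP_iff' {a : L} : IsAtomP a ↔ IsAtom a := by
  constructor
  · rintro ⟨z, hz, hcov⟩
    have hzb : z = ⊥ := le_bot_iff.mp (hz ⊥)
    subst hzb
    exact bot_covBy_iff.mp hcov
  · intro h
    exact ⟨⊥, fun w => bot_le, h.bot_covBy⟩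

variable (hc : ∀ c : Set L, IsChain (· ≤ ·) c → c.Finite)

include hc in
lemma wf_lt' : WellFounded ((· < ·) : L → L → Prop) := by
  rw [RelEmbedding.wellFounded_iff_isEmpty]
  constructor
  intro f
  have hch : IsChain (· ≤ ·) (Set.range f) := by
    rintro _ ⟨m, rfl⟩ _ ⟨n, rfl⟩ _
    rcases lt_trichotomy m n with h | h | h
    · exact Or.inr (f.map_rel_iff.mpr h).le
    · exact Or.inl (h ▸ le_refl _)
    · exact Or.inl (f.map_rel_iff.mpr h).le
  exact (Set.infinite_range_of_injective f.injective) (hc _ hch)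

include hc in
lemma wf_gt' : WellFounded ((· > ·) : L → L → Prop) := by
  rw [RelEmbedding.wellFounded_iff_isEmpty]
  constructor
  intro f
  have hch : IsChain (· ≤ ·) (Set.range f) := by
    rintro _ ⟨m, rfl⟩ _ ⟨n, rfl⟩ _
    rcases lt_trichotomy m n with h | h | h
    · exact Or.inl (f.map_rel_iff.mpr h).le
    · exact Or.inl (h ▸ le_refl _)
    · exact Or.inr (f.map_rel_iff.mpr h).le
  exact (Set.infinite_range_of_injective f.injective) (hc _ hch)

include hc in
lemma exists_maximal' (S : Set L) (hS : S.Nonempty) : ∃ m ∈ S, ∀ y ∈ S, ¬ m < y :=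
  (wf_gt' hc).has_min S hS

include hc in
lemma exists_minimal' (S : Set L) (hS : S.Nonempty) : ∃ m ∈ S, ∀ y ∈ S, ¬ y < m :=
  (wf_lt' hc).has_min S hS

variable (hd : ∀ a b c : L, a ⋖ b → a ⋖ c → b ≠ c → ∃ d, b ⋖ d ∧ c ⋖ d)

include hc hd in
/-- In a semimodular chain-finite lattice, joining an atom not below `h` covers `h`. -/
lemma covBy_sup_atom' : ∀ h q : L, IsAtom q → ¬ q ≤ h → h ⋖ h ⊔ q := by
  intro h
  induction h using (wf_lt' hc).induction with
  | _ h IH =>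
    intro q hq hqh
    rcases eq_or_ne h ⊥ with rfl | hne
    · rw [bot_sup_eq]
      exact hq.bot_covBy
    · obtain ⟨g, hg⟩ : ∃ g : L, g ⋖ h := by
        obtain ⟨m, hm, hmax⟩ := exists_maximal' hc {y | y < h} ⟨⊥, bot_lt_iff_ne_bot.mpr hne⟩
        exact ⟨m, hm, fun z h1 h2 => hmax z h2 h1⟩
      have hqg : ¬ q ≤ g := fun h' => hqh (h'.trans hg.le)
      have IH' : g ⋖ g ⊔ q := IH g hg.lt q hq hqg
      have hne2 : h ≠ g ⊔ q := by
        rintro rfl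
        exact hqh le_sup_right
      obtain ⟨d, hd1, hd2⟩ := hd g h (g ⊔ q) hg IH' hne2
      have hle : h ⊔ q ≤ d := sup_le hd1.le (le_sup_right.trans hd2.le)
      have hlt : h < h ⊔ q :=
        left_lt_sup.mpr hqh
      rcases hle.lt_or_eq with hlt2 | heq
      · exact absurd hlt2 (hd1.2 hlt)
      · rw [heq]; exact hd1

variable (hat : ∀ x : L, ∃ S : Set L, (∀ a ∈ S, IsAtomP a) ∧ IsLUB S x)

include hat in
lemma atomistic' (x : L) : x = sSup {a : L | IsAtom a ∧ a ≤ x} := by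
  obtain ⟨S, hS, hlub⟩ := hat x
  have hx : x = sSup S := (hlub.sSup_eq).symm
  apply le_antisymm
  · rw [hx]
    exact sSup_le_sSup fun a ha =>
      ⟨isAtomP_iff'.mp (hS a ha), hx ▸ le_sSup ha⟩
  · exact sSup_le fun a ha => ha.2

include hat in
/-- We can pick an atom below `m` not below `x`. -/
lemma exists_atom_not_le' {x m : L} (hxm : x ≤ m) (hne : x ≠ m) :
    ∃ p : L, IsAtom p ∧ p ≤ m ∧ ¬ p ≤ x := by
  by_contra hcon
  push_neg at hcon
  have := atomistic' hat m
  have hmx : m ≤ x := by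
    rw [this]
    exact sSup_le fun a ha => hcon a ha.1 ha.2
  exact hne (le_antisymm hxm hmx)

include hc hd hat in
lemma exists_coatom' (x : L) (p : L) (hp : IsAtom p) (hpx : ¬ p ≤ x) :
    ∃ h : L, IsCoatom h ∧ x ≤ h ∧ ¬ p ≤ h := by
  obtain ⟨h, hh, hmax⟩ := exists_maximal' hc {y | x ≤ y ∧ ¬ p ≤ y} ⟨x, le_refl x, hpx⟩
  obtain ⟨hxh, hph⟩ := hh
  have hall : ∀ y : L, h < y → h ⊔ p ≤ y := by
    intro y hy
    have hpy : p ≤ y := by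
      by_contra hpy
      exact hmax y ⟨hxh.trans hy.le, hpy⟩ hy
    exact sup_le hy.le hpy
  have hcov : h ⋖ h ⊔ p := covBy_sup_atom' hc hd h p hp hph
  have htop : h ⊔ p = ⊤ := by
    by_contra hnt
    obtain ⟨q, hq, _, hqhp⟩ := exists_atom_not_le' hat (le_top : h ⊔ p ≤ ⊤) hnt
    have hqh : ¬ q ≤ h := fun h' => hqhp (h'.trans le_sup_left)
    have h1 : h < h ⊔ q :=
      left_lt_sup.mpr hqh
    have h2 : h ⊔ p ≤ h ⊔ q := hall _ h1
    have hcov2 : h ⋖ h ⊔ q := covBy_sup_atom' hc hd h q hq hqh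
    have h3 : h < h ⊔ p := hcov.lt
    rcases h2.lt_or_eq with hlt | heq
    · exact hcov2.2 h3 hlt
    · exact hqhp (heq ▸ le_sup_right : q ≤ h ⊔ p)
  refine ⟨h, ⟨fun e => hph (e ▸ le_top), fun y hy => ?_⟩, hxh, hph⟩
  exact top_le_iff.mp (htop ▸ hall y hy)

include hc hd hat in
lemma coatomistic' (x : L) : x = sInf {h : L | IsCoatom h ∧ x ≤ h} := by
  have hxm : x ≤ sInf {h : L | IsCoatom h ∧ x ≤ h} := le_sInf fun h hh => hh.2
  rcases eq_or_ne x (sInf {h : L | IsCoatom h ∧ x ≤ h}) with h | h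
  · exact h
  · exfalso
    obtain ⟨p, hp, hpm, hpx⟩ := exists_atom_not_le' hat hxm h
    obtain ⟨k, hk, hxk, hpk⟩ := exists_coatom' hc hd hat x p hp hpx
    exact hpk (hpm.trans (sInf_le ⟨hk, hxk⟩))

include hc hat in
lemma finite_join' (x : L) : ∃ F : Finset L, (∀ a ∈ F, IsAtom a) ∧ sSup (F : Set L) = x := by
  set S : Set L := {a : L | IsAtom a ∧ a ≤ x} with hSdef
  have hx : x = sSup S := atomistic' hat x
  set T : Set L := {y | ∃ F : Finset L, (F : Set L) ⊆ S ∧ y = sSup (F : Set L)} with hTdef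
  have hTne : T.Nonempty := ⟨⊥, ∅, by simp⟩
  obtain ⟨m, ⟨F₀, hF₀S, hmF₀⟩, hmax⟩ := exists_maximal' hc T hTne
  have hSm : ∀ a ∈ S, a ≤ m := by
    intro a ha
    have hmem : m ⊔ a ∈ T := by
      refine ⟨insert a F₀, ?_, ?_⟩
      · rw [Finset.coe_insert]
        exact Set.insert_subset ha hF₀S
      · rw [Finset.coe_insert, sSup_insert, hmF₀, sup_comm]
    have hle : m ≤ m ⊔ a := le_sup_left
    rcases hle.lt_or_eq with hlt | heq
    · exact absurd hlt (hmax _ hmem)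
    · exact le_trans le_sup_right heq.symm.le
  have hxm : x ≤ m := hx ▸ sSup_le hSm
  have hmx : m ≤ x := by
    rw [hmF₀, hx]
    exact sSup_le_sSup hF₀S
  exact ⟨F₀, fun a ha => (hF₀S ha).1, by rw [← hmF₀]; exact le_antisymm hmx hxm⟩

include hc hd hat in
lemma finite_meet' (x : L) :
    ∃ F : Finset L, (∀ h ∈ F, IsCoatom h) ∧ sInf (F : Set L) = x := by
  set S : Set L := {h : L | IsCoatom h ∧ x ≤ h} with hSdef
  have hx : x = sInf S := coatomistic' hc hd hat x
  set T : Set L := {y | ∃ F : Finset L, (F : Set L) ⊆ S ∧ y = sInf (F : Set L)} with hTdef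
  have hTne : T.Nonempty := ⟨⊤, ∅, by simp⟩
  obtain ⟨m, ⟨F₀, hF₀S, hmF₀⟩, hmin⟩ := exists_minimal' hc T hTne
  have hSm : ∀ h ∈ S, m ≤ h := by
    intro h ha
    have hmem : m ⊓ h ∈ T := by
      refine ⟨insert h F₀, ?_, ?_⟩
      · rw [Finset.coe_insert]
        exact Set.insert_subset ha hF₀S
      · rw [Finset.coe_insert, sInf_insert, hmF₀, inf_comm]
    have hle : m ⊓ h ≤ m := inf_le_left
    rcases hle.lt_or_eq with hlt | heq
    · exact absurd hlt (hmin _ hmem)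
    · exact le_trans heq.ge inf_le_right
  have hmx : m ≤ x := hx ▸ le_sInf hSm
  have hxm : x ≤ m := by
    rw [hmF₀, hx]
    exact sInf_le_sInf hF₀S
  exact ⟨F₀, fun a ha => (hF₀S ha).1, by rw [← hmF₀]; exact le_antisymm hmx hxm⟩

omit [CompleteLattice L] in
/-- Injection into finite sets of elements satisfying `P`,
given that every element is recovered from such a finite set by `g`. -/
lemma exists_injection_to_finsets (P : L → Prop) (g : Finset L → L)
    (hrec : ∀ x : L, ∃ F : Finset L, (∀ a ∈ F, P a) ∧ g F = x) :
    ∃ f : L → Finset {a : L // P a}, Function.Injective f := by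
  classical
  choose F hF hgF using hrec
  refine ⟨fun x => (F x).subtype P, fun x y hxy => ?_⟩
  have hx : ((F x).subtype P).map (Function.Embedding.subtype P) = F x :=
    Finset.subtype_map_of_mem (hF x)
  have hy : ((F y).subtype P).map (Function.Embedding.subtype P) = F y :=
    Finset.subtype_map_of_mem (hF y)
  have : F x = F y := by rw [← hx, ← hy]; exact congrArg _ hxy
  rw [← hgF x, ← hgF y, this]

end Aux

/-- In an infinite geometric lattice of finite height, the set of atoms, the set of
hyperplanes, and the whole lattice all have the same cardinality. -/
theorem card_atoms_eq_card_coatoms_eq_card {L : Type u} [CompleteLattice L]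
    (hL : IsGeomLatFH L) (hinf : Infinite L) :
    Cardinal.mk {a : L | IsAtom a} = Cardinal.mk L ∧
    Cardinal.mk {h : L | IsCoatom h} = Cardinal.mk L := by
  obtain ⟨-, -, hc, hd, hat⟩ := hL
  obtain ⟨fA, hfA⟩ := exists_injection_to_finsets (IsAtom : L → Prop)
    (fun F => sSup (F : Set L)) (finite_join' hc hat)
  obtain ⟨fH, hfH⟩ := exists_injection_to_finsets (IsCoatom : L → Prop)
    (fun F => sInf (F : Set L)) (finite_meet' hc hd hat)
  have hAinf : Infinite {a : L // IsAtom a} := by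
    by_contra hfin
    rw [not_infinite_iff_finite] at hfin
    haveI := Fintype.ofFinite {a : L // IsAtom a}
    haveI : DecidableEq {a : L // IsAtom a} := Classical.decEq _
    exact (Finite.of_injective fA hfA).not_infinite hinf
  have hHinf : Infinite {h : L // IsCoatom h} := by
    by_contra hfin
    rw [not_infinite_iff_finite] at hfin
    haveI := Fintype.ofFinite {h : L // IsCoatom h}
    haveI : DecidableEq {h : L // IsCoatom h} := Classical.decEq _
    exact (Finite.of_injective fH hfH).not_infinite hinf
  constructor
  · apply le_antisymm
    · exact Cardinal.mk_set_le _
    · calc Cardinal.mk L ≤ Cardinal.mk (Finset {a : L // IsAtom a}) :=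
            Cardinal.mk_le_of_injective hfA
        _ = Cardinal.mk {a : L // IsAtom a} := Cardinal.mk_finset_of_infinite _
        _ = Cardinal.mk {a : L | IsAtom a} := rfl
  · apply le_antisymm
    · exact Cardinal.mk_set_le _
    · calc Cardinal.mk L ≤ Cardinal.mk (Finset {h : L // IsCoatom h}) :=
            Cardinal.mk_le_of_injective hfH
        _ = Cardinal.mk {h : L // IsCoatom h} := Cardinal.mk_finset_of_infinite _
        _ = Cardinal.mk {h : L | IsCoatom h} := rfl
end

section
/- Let L be an infinite geometric lattice of finite height such that |[0,x]| < |L| for every element x of rank 2. If |L| is a regular cardinal, then L has a matching. -/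
universe u

/-!
Let `κ = #L`. For an atom `a` and an element `t ≥ a` with `κ ≤ #[⊥, t]`, at least `κ` hyperplanes
of `[⊥, t]` contain `a`. Indeed, `[⊥, t]` is generated by finite joins of its atoms, so it has
`κ` atoms; they are spread over the lines `a ⊔ b`, each of size `< κ`, so by regularity there are
`κ` lines through `a` below `t`. If fewer than `κ` hyperplanes of `[⊥, t]` contained `a`, one of
them, `g`, would contain `κ` of these lines; by well-founded induction `κ` hyperplanes of `[⊥, g]`
contain `a`, and for an atom `b ≤ t` with `b ≰ g`, semimodularity makes `h ↦ h ⊔ b` an injection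
of those into the hyperplanes of `[⊥, t]` through `a`.

Taking `t = ⊤`, every atom lies in `κ` hyperplanes while there are at most `κ` atoms, so a greedy
choice along a well-order of the atoms of type `κ.ord` is a matching.
-/

open Cardinal Set

section FiniteHeight

variable {α : Type*} [PartialOrder α]

theorem wellFoundedLT_of_isChain_finite (h : ∀ c : Set α, IsChain (· ≤ ·) c → c.Finite) :
    WellFoundedLT α :=
  ⟨RelEmbedding.wellFounded_iff_isEmpty.2 ⟨fun f => infinite_range_of_injective f.injective
    (h _ (StrictAnti.antitone (fun _ _ hmn => f.map_rel_iff.2 hmn)).isChain_range)⟩⟩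

theorem wellFoundedGT_of_isChain_finite (h : ∀ c : Set α, IsChain (· ≤ ·) c → c.Finite) :
    WellFoundedGT α :=
  ⟨RelEmbedding.wellFounded_iff_isEmpty.2 ⟨fun f => infinite_range_of_injective f.injective
    (h _ (StrictMono.monotone (fun _ _ hmn => f.map_rel_iff.2 hmn)).isChain_range)⟩⟩

end FiniteHeight

theorem IsAtomP.isAtom {P : Type*} [PartialOrder P] [OrderBot P] {a : P} (h : IsAtomP a) :
    IsAtom a := by
  obtain ⟨z, hz, hza⟩ := h
  rw [le_antisymm (hz ⊥) bot_le] at hza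
  exact bot_covBy_iff.1 hza

section Semimodular

variable {L : Type*} [Lattice L]

theorem isWeakUpperModularLattice_of_covBy
    (h : ∀ a b c : L, a ⋖ b → a ⋖ c → b ≠ c → ∃ d, b ⋖ d ∧ c ⋖ d) :
    IsWeakUpperModularLattice L where
  covBy_sup_of_inf_covBy_covBy {a b} ha hb := by
    have hab : a ≠ b := by
      rintro rfl
      exact ha.lt.ne (inf_idem a)
    obtain ⟨d, had, hbd⟩ := h _ _ _ ha hb hab
    have hlt : a < a ⊔ b := left_lt_sup.2 fun hba => hb.lt.ne (inf_eq_right.2 hba)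
    rwa [(had.eq_or_eq hlt.le (sup_le had.le hbd.le)).resolve_left hlt.ne']

theorem covBy_sup_of_covBy_of_covBy [IsWeakUpperModularLattice L] {a b c : L} (hab : a ⋖ b)
    (hac : a ⋖ c) (hbc : b ≠ c) : b ⋖ b ⊔ c := by
  have hinf : b ⊓ c = a := by
    refine (hab.eq_or_eq (le_inf hab.le hac.le) inf_le_left).resolve_right fun h => hbc ?_
    exact (hac.eq_or_eq hab.le (inf_eq_left.1 h)).resolve_left hab.lt.ne'
  rw [← hinf] at hab hac
  exact hab.sup_of_inf_of_inf_left hac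

theorem covBy_sup_of_isAtom_of_not_le [OrderBot L] [WellFoundedLT L] [IsStronglyCoatomic L]
    [IsWeakUpperModularLattice L] {p x : L} (hp : IsAtom p) (hpx : ¬p ≤ x) : x ⋖ x ⊔ p := by
  induction x using WellFoundedLT.induction with
  | _ x ih =>
  rcases eq_bot_or_bot_lt x with rfl | hx
  · simpa using hp.bot_covBy
  obtain ⟨y, -, hyx⟩ := exists_le_covBy_of_lt hx
  have hpy : ¬p ≤ y := fun h => hpx (h.trans hyx.le)
  have hne : x ≠ y ⊔ p := fun h => hpx (h ▸ le_sup_right)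
  have := covBy_sup_of_covBy_of_covBy hyx (ih y hyx.lt hpy) hne
  rwa [← sup_assoc, sup_of_le_left hyx.le] at this

end Semimodular

theorem mk_Iic_le_mk_atoms_le {L : Type*} [CompleteLattice L] [WellFoundedGT L] [IsAtomistic L]
    (t : L) (ht : ℵ₀ ≤ #(Iic t)) : #(Iic t) ≤ #{a : L // IsAtom a ∧ a ≤ t} := by
  have hsurj : Function.Surjective fun s : {s : Finset L // ∀ a ∈ s, IsAtom a ∧ a ≤ t} =>
      (⟨s.1.sup id, Finset.sup_le fun a ha => (s.2 a ha).2⟩ : Iic t) := by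
    rintro ⟨x, hx⟩
    obtain ⟨s, hs, hsup⟩ := CompleteLattice.WellFoundedGT.isSupFiniteCompact L {a | IsAtom a ∧ a ≤ x}
    refine ⟨⟨s, fun a ha => ⟨(hs ha).1, (hs ha).2.trans hx⟩⟩, Subtype.ext ?_⟩
    simpa using hsup.symm
  have h := mk_le_of_surjective hsurj
  rw [← mk_congr (Equiv.finsetSubtypeComm _)] at h
  have : Infinite {a : L // IsAtom a ∧ a ≤ t} := by
    by_contra hfin
    rw [not_infinite_iff_finite] at hfin
    exact (h.trans_lt (lt_aleph0_of_finite _)).not_ge ht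
  rwa [mk_finset_of_infinite] at h

section GeometricCounting

variable {L : Type u} [CompleteLattice L] [WellFoundedLT L] [WellFoundedGT L] [IsAtomistic L]
  [IsWeakUpperModularLattice L] {κ : Cardinal.{u}}

theorem le_mk_lines_of_le_mk_Iic (hκ : κ.IsRegular) {a t : L} (ha : IsAtom a) (hat : a ≤ t)
    (ht : κ ≤ #(Iic t)) (hlines : ∀ ℓ, a ⋖ ℓ → #(Iic ℓ) < κ) :
    κ ≤ #{ℓ | a ⋖ ℓ ∧ ℓ ≤ t} := by
  by_contra! hΛ
  set Λ := {ℓ | a ⋖ ℓ ∧ ℓ ≤ t}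
  have hcover : {b : L | IsAtom b ∧ b ≤ t} ⊆ {a} ∪ ⋃ ℓ : Λ, Iic (ℓ : L) := by
    rintro b ⟨hb, hbt⟩
    rcases eq_or_ne b a with rfl | hba
    · exact Or.inl rfl
    have hab : ¬b ≤ a := fun h => hba ((ha.le_iff_eq hb.1).1 h)
    exact Or.inr (mem_iUnion.2
      ⟨⟨a ⊔ b, covBy_sup_of_isAtom_of_not_le hb hab, sup_le hat hbt⟩, le_sup_right⟩)
  have hU : #(⋃ ℓ : Λ, Iic (ℓ : L)) < κ :=
    (card_iUnion_lt_iff_forall_of_isRegular hκ hΛ).2 fun ℓ => hlines ℓ ℓ.2.1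
  have := calc
    κ ≤ #(Iic t) := ht
    _ ≤ #{b : L | IsAtom b ∧ b ≤ t} := mk_Iic_le_mk_atoms_le t (hκ.aleph0_le.trans ht)
    _ ≤ #({a} ∪ ⋃ ℓ : Λ, Iic (ℓ : L) : Set L) := mk_le_mk_of_subset hcover
    _ ≤ #({a} : Set L) + #(⋃ ℓ : Λ, Iic (ℓ : L)) := mk_union_le _ _
    _ < κ := by
      rw [mk_singleton]
      exact add_lt_of_lt hκ.aleph0_le (one_lt_aleph0.trans_le hκ.aleph0_le) hU
  exact this.false

theorem mk_hyperplanes_le_of_covBy {a g t : L} (hgt : g ⋖ t) :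
    #{h | h ⋖ g ∧ a ≤ h} ≤ #{h | h ⋖ t ∧ a ≤ h} := by
  obtain ⟨b, hb, hbt, hbg⟩ : ∃ b, IsAtom b ∧ b ≤ t ∧ ¬b ≤ g := by
    by_contra! h
    exact hgt.lt.not_ge (le_iff_atom_le_imp.2 h)
  have hgb : g ⊔ b = t :=
    (hgt.eq_or_eq le_sup_left (sup_le hgt.le hbt)).resolve_left fun h => hbg (h ▸ le_sup_right)
  have hcov : ∀ h, h ⋖ g → h ⊔ b ⋖ t := fun h hh => by
    have hne : h ⊔ b ≠ g := fun e => hbg (e ▸ le_sup_right)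
    have := covBy_sup_of_covBy_of_covBy
      (covBy_sup_of_isAtom_of_not_le hb fun e => hbg (e.trans hh.le)) hh hne
    rwa [sup_right_comm, sup_of_le_right hh.le, hgb] at this
  have hinf : ∀ h, h ⋖ g → g ⊓ (h ⊔ b) = h := fun h hh => by
    refine (hh.eq_or_eq (le_inf hh.le le_sup_left) inf_le_left).resolve_right fun e => hbg ?_
    have := (hgt.eq_or_eq (inf_eq_left.1 e) (hcov h hh).le).resolve_right (hcov h hh).lt.ne
    exact this ▸ le_sup_right
  refine mk_le_of_injective (f := fun h : {h | h ⋖ g ∧ a ≤ h} =>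
    (⟨h.1 ⊔ b, hcov _ h.2.1, h.2.2.trans le_sup_left⟩ : {h | h ⋖ t ∧ a ≤ h})) ?_
  rintro ⟨h₁, hh₁⟩ ⟨h₂, hh₂⟩ e
  simp only [Subtype.mk.injEq] at e ⊢
  rw [← hinf h₁ hh₁.1, ← hinf h₂ hh₂.1, e]

theorem le_mk_hyperplanes_of_le_mk_Iic (hκ : κ.IsRegular) {a t : L} (ha : IsAtom a)
    (hat : a ≤ t) (ht : κ ≤ #(Iic t)) (hlines : ∀ ℓ, a ⋖ ℓ → #(Iic ℓ) < κ) :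
    κ ≤ #{g | g ⋖ t ∧ a ≤ g} := by
  induction t using WellFoundedLT.induction with
  | _ t ih =>
  by_contra! hH
  have hcover : {ℓ | a ⋖ ℓ ∧ ℓ ≤ t} ⊆ ⋃ g : {g | g ⋖ t ∧ a ≤ g}, {ℓ | a ⋖ ℓ ∧ ℓ ≤ g} := by
    rintro ℓ ⟨haℓ, hℓt⟩
    have hℓt' : ℓ < t := hℓt.lt_of_ne fun e => (hlines ℓ haℓ).not_ge (e ▸ ht)
    obtain ⟨g, hℓg, hgt⟩ := exists_le_covBy_of_lt hℓt'
    exact mem_iUnion.2 ⟨⟨g, hgt, haℓ.le.trans hℓg⟩, haℓ, hℓg⟩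
  obtain ⟨⟨g, hgt, hag⟩, hg⟩ : ∃ g : {g | g ⋖ t ∧ a ≤ g}, κ ≤ #{ℓ | a ⋖ ℓ ∧ ℓ ≤ g.1} := by
    by_contra! hsmall
    exact ((le_mk_lines_of_le_mk_Iic hκ ha hat ht hlines).trans (mk_le_mk_of_subset hcover)).not_gt
      ((card_iUnion_lt_iff_forall_of_isRegular hκ hH).2 hsmall)
  have hIg : κ ≤ #(Iic g) := hg.trans (mk_le_mk_of_subset fun ℓ h => h.2)
  exact hH.not_ge ((ih g hgt.lt hag hIg).trans (mk_hyperplanes_le_of_covBy hgt))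

end GeometricCounting

theorem exists_injective_forall_mem_of_mk_Iio_lt {α β : Type u} [LinearOrder α]
    [WellFoundedLT α] (H : α → Set β) (hH : ∀ a, #(Iio a) < #(H a)) :
    ∃ f : α → β, Function.Injective f ∧ ∀ a, f a ∈ H a := by
  have hfresh : ∀ a (g : Iio a → β), (H a \ range g).Nonempty := fun a g =>
    sdiff_nonempty.2 fun hsub => ((mk_le_mk_of_subset hsub).trans mk_range_le).not_gt (hH a)
  choose next hnext using hfresh
  let f : α → β := wellFounded_lt.fix fun a ih => next a fun b => ih b.1 b.2
  have hf : ∀ a, f a = next a fun b => f b.1 := wellFounded_lt.fix_eq _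
  have hfH : ∀ a, f a ∈ H a \ range fun b : Iio a => f b.1 := fun a => hf a ▸ hnext a _
  have hne : ∀ {a b}, b < a → f b ≠ f a := fun hba e => (hfH _).2 ⟨⟨_, hba⟩, e⟩
  refine ⟨f, fun a b e => ?_, fun a => (hfH a).1⟩
  by_contra hab
  rcases lt_or_gt_of_ne hab with h | h
  · exact hne h e
  · exact hne h e.symm

theorem exists_injective_forall_mem_of_le_mk {α β : Type u} {κ : Cardinal.{u}} (hα : #α ≤ κ)
    (H : α → Set β) (hH : ∀ a, κ ≤ #(H a)) :
    ∃ f : α → β, Function.Injective f ∧ ∀ a, f a ∈ H a := by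
  obtain ⟨_, _, h⟩ := Cardinal.exists_ord_eq_type_lt α
  exact exists_injective_forall_mem_of_mk_Iio_lt H fun a =>
    (Cardinal.mk_Iio_lt a h).trans_le (hα.trans (hH a))

theorem regular_cardinality_geometric_lattice_matching_general {L : Type u} [CompleteLattice L]
    (hL : IsGeomLatFH L) (r : L → ℕ) (hr : IsRankFn r)
    (hsmall : ∀ x : L, r x = 2 → Cardinal.mk (Set.Iic x) < Cardinal.mk L)
    (hreg : (Cardinal.mk L).IsRegular) :
    HasMatching L := by
  obtain ⟨-, -, hchain, hsemimod, hatomistic⟩ := hL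
  have := wellFoundedLT_of_isChain_finite hchain
  have := wellFoundedGT_of_isChain_finite hchain
  have := isWeakUpperModularLattice_of_covBy hsemimod
  have : IsAtomistic L := ⟨fun x =>
    let ⟨S, hS, hx⟩ := hatomistic x
    ⟨S, hx, fun a ha => (hS a ha).isAtom⟩⟩
  have hlines : ∀ a : L, IsAtom a → ∀ ℓ, a ⋖ ℓ → #(Iic ℓ) < #L := fun a ha ℓ haℓ =>
    hsmall ℓ (by rw [hr.2 a ℓ haℓ, hr.2 ⊥ a ha.bot_covBy, hr.1])
  have hhyperplanes : ∀ a : {a : L // IsAtom a}, #L ≤ #{g : L | g ⋖ ⊤ ∧ (a : L) ≤ g} := fun a =>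
    le_mk_hyperplanes_of_le_mk_Iic hreg a.2 le_top (by rw [Iic_top, mk_univ])
      (hlines a a.2)
  obtain ⟨f, hf, hfH⟩ := exists_injective_forall_mem_of_le_mk (mk_subtype_le _) _ hhyperplanes
  exact ⟨fun a => ⟨f a, covBy_top_iff.1 (hfH a).1⟩, fun a b e => hf (congrArg Subtype.val e),
    fun a => (hfH a).2⟩

/-- An infinite geometric lattice of finite height of regular cardinality in which every
rank-2 interval `[0,x]` has cardinality smaller than that of the lattice has a matching. -/
theorem regular_cardinality_geometric_lattice_matching {L : Type u} [CompleteLattice L]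
    (hL : IsGeomLatFH L) (hinf : Infinite L) (r : L → ℕ) (hr : IsRankFn r)
    (hsmall : ∀ x : L, r x = 2 → Cardinal.mk (Set.Iic x) < Cardinal.mk L)
    (hreg : (Cardinal.mk L).IsRegular) :
    HasMatching L :=
  regular_cardinality_geometric_lattice_matching_general hL r hr hsmall hreg
end
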